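/- arXiv:2007.07808 — 3 statements merged into one kernel-verified Lean document; each statement's English description precedes it below -/
import Mathlib

section
/- Let f be a feasible flow over time in a single-sink network N and let L > 0 be such that every node label function ℓ_v is L-Lipschitz on ℝ≥0. If an edge e = xy is active at some time θ′ and ℓ_x(θ) < ℓ_y(θ) holds at some later time θ > θ′, then θ − θ′ ≥ τ_min/(2L). -/
open MeasureTheory Set

/-- A walk in a directed graph given by `tail`/`head` maps: `IsWalk tail head v w L`
means the list of edges `L` forms a walk from `v` to `w`. -/
def IsWalk {V E : Type} (tail head : E → V) : V → V → List E → Prop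
  | v, w, [] => v = w
  | v, w, e :: L => tail e = v ∧ IsWalk tail head (head e) w L

/-- A right-constant step function with finitely many jump points. -/
def RightConstantStep (g : ℝ → ℝ) : Prop :=
  ∃ s : Finset ℝ, ∀ x y : ℝ, x ≤ y → (∀ p ∈ s, ¬ (x < p ∧ p ≤ y)) → g x = g y

/-- A single-sink network: a finite directed graph with positive rational capacities
and travel times, a sink reachable from every node, and nonnegative rational-valued
right-constant step network inflow rates (zero at the sink and for negative times). -/
structure Network (V E : Type) [Fintype V] [DecidableEq V] [Fintype E] [DecidableEq E] where
  tail : E → V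
  head : E → V
  cap : E → ℝ
  time : E → ℝ
  sink : V
  u : V → ℝ → ℝ
  cap_pos : ∀ e, 0 < cap e
  cap_rat : ∀ e, ∃ q : ℚ, cap e = (q : ℝ)
  time_pos : ∀ e, 0 < time e
  time_rat : ∀ e, ∃ q : ℚ, time e = (q : ℝ)
  reach : ∀ v, ∃ L : List E, IsWalk tail head v sink L
  u_nonneg : ∀ v θ, 0 ≤ u v θ
  u_rat : ∀ v θ, ∃ q : ℚ, u v θ = (q : ℝ)
  u_sink : ∀ θ, u sink θ = 0
  u_neg : ∀ v θ, θ < 0 → u v θ = 0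
  u_step : ∀ v, RightConstantStep (u v)

variable {V E : Type} [Fintype V] [DecidableEq V] [Fintype E] [DecidableEq E]

/-- The edges leaving a node `v`, i.e. `δ⁺(v)`. -/
def Network.outEdges (N : Network V E) (v : V) : Finset E :=
  Finset.univ.filter (fun e => N.tail e = v)

/-- The edges entering a node `v`, i.e. `δ⁻(v)`. -/
def Network.inEdges (N : Network V E) (v : V) : Finset E :=
  Finset.univ.filter (fun e => N.head e = v)

/-- `τ_min`, the minimal travel time of an edge. -/
noncomputable def Network.tauMin (N : Network V E) : ℝ := sInf (Set.range N.time)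

/-- `max_ζ u_v(ζ)`, the maximal network inflow rate at `v`. -/
noncomputable def Network.uMax (N : Network V E) (v : V) : ℝ := ⨆ θ : ℝ, N.u v θ

/-- The maximal out-degree `Δ` of the network. -/
def Network.maxOutDeg (N : Network V E) : ℕ :=
  Finset.univ.sup (fun v => (N.outEdges v).card)

/-- All network inflow rates have bounded support. -/
def Network.BddInflow (N : Network V E) : Prop :=
  ∀ v, ∃ B : ℝ, ∀ θ, B ≤ θ → N.u v θ = 0

/-- The directed graph of the network is acyclic. -/
def Network.Acyclic (N : Network V E) : Prop :=
  ∀ (v : V) (L : List E), L ≠ [] → ¬ IsWalk N.tail N.head v v L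

/-- A flow over time: locally integrable nonnegative edge in- and outflow rates. -/
structure FlowOverTime (N : Network V E) where
  fplus : E → ℝ → ℝ
  fminus : E → ℝ → ℝ
  fplus_nonneg : ∀ e θ, 0 ≤ fplus e θ
  fminus_nonneg : ∀ e θ, 0 ≤ fminus e θ
  fplus_int : ∀ e θ, IntervalIntegrable (fplus e) volume 0 θ
  fminus_int : ∀ e θ, IntervalIntegrable (fminus e) volume 0 θ

/-- The queue length `q_e(θ) = F⁺_e(θ) − F⁻_e(θ + τ_e)`. -/
noncomputable def queueOf (N : Network V E) (fplus fminus : E → ℝ → ℝ) (e : E) (θ : ℝ) : ℝ :=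
  (∫ ζ in (0:ℝ)..θ, fplus e ζ) - ∫ ζ in (0:ℝ)..(θ + N.time e), fminus e ζ

/-- The instantaneous travel time `c_e(θ) = τ_e + q_e(θ)/ν_e`. -/
noncomputable def ctimeOf (N : Network V E) (fplus fminus : E → ℝ → ℝ) (e : E) (θ : ℝ) : ℝ :=
  N.time e + queueOf N fplus fminus e θ / N.cap e

/-- The node label `ℓ_v(θ)`: the shortest instantaneous travel time from `v` to the sink. -/
noncomputable def labelOf (N : Network V E) (fplus fminus : E → ℝ → ℝ) (v : V) (θ : ℝ) : ℝ :=
  sInf { r : ℝ | ∃ L : List E, IsWalk N.tail N.head v N.sink L ∧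
                  r = (L.map (fun e => ctimeOf N fplus fminus e θ)).sum }

/-- Edge `e` is active at time `θ`: `ℓ_{tail e}(θ) = c_e(θ) + ℓ_{head e}(θ)`. -/
def ActiveOf (N : Network V E) (fplus fminus : E → ℝ → ℝ) (e : E) (θ : ℝ) : Prop :=
  labelOf N fplus fminus (N.tail e) θ =
    ctimeOf N fplus fminus e θ + labelOf N fplus fminus (N.head e) θ

/-- Feasibility of a flow over time: flow conservation (i)/(ii), no outflow before `τ_e`
(iii), and queues operating at capacity (iv). -/
def Feasible (N : Network V E) (f : FlowOverTime N) : Prop :=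
  (∀ v, v ≠ N.sink → ∀ θ : ℝ, 0 ≤ θ →
      (∑ e ∈ N.outEdges v, f.fplus e θ) - (∑ e ∈ N.inEdges v, f.fminus e θ) = N.u v θ) ∧
  (∀ θ : ℝ, 0 ≤ θ →
      (∑ e ∈ N.outEdges N.sink, f.fplus e θ) - (∑ e ∈ N.inEdges N.sink, f.fminus e θ) ≤ 0) ∧
  (∀ e, ∀ θ : ℝ, 0 ≤ θ → θ < N.time e → f.fminus e θ = 0) ∧
  (∀ e, ∀ θ : ℝ, 0 ≤ θ →
      f.fminus e (θ + N.time e) =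
        if 0 < queueOf N f.fplus f.fminus e θ then N.cap e
        else min (f.fplus e θ) (N.cap e))

/-- An instantaneous dynamic equilibrium: a feasible flow that only sends flow
into currently active edges. -/
def IsIDE (N : Network V E) (f : FlowOverTime N) : Prop :=
  Feasible N f ∧
  ∀ e, ∀ θ : ℝ, 0 ≤ θ → 0 < f.fplus e θ → ActiveOf N f.fplus f.fminus e θ

/-- `g` is almost everywhere constant on the set `S`. -/
def AEConstOn (g : ℝ → ℝ) (S : Set ℝ) : Prop :=
  ∃ c : ℝ, ∀ᵐ θ ∂(volume.restrict S), g θ = c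

/-- The `i`-th segment of the partition `0 = t 0 < t 1 < ⋯ < t n < ∞`. -/
def phaseSeg (n : ℕ) (t : ℕ → ℝ) (i : ℕ) : Set ℝ :=
  if i < n then Set.Ioo (t i) (t (i+1)) else Set.Ioi (t n)

/-- `ℝ≥0` splits (up to finitely many points) into the `n+1` intervals given by
`t`, on each of which all edge in- and outflow rates are a.e. constant; i.e. the
flow has at most `n+1` phases. -/
def PhasePartition (N : Network V E) (f : FlowOverTime N) (n : ℕ) (t : ℕ → ℝ) : Prop :=
  t 0 = 0 ∧ (∀ i, i < n → t i < t (i+1)) ∧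
  ∀ i, i ≤ n → ∀ e, AEConstOn (f.fplus e) (phaseSeg n t i) ∧ AEConstOn (f.fminus e) (phaseSeg n t i)

lemma queue_nonneg {V E : Type} [Fintype V] [DecidableEq V] [Fintype E] [DecidableEq E]
    (N : Network V E) (f : FlowOverTime N) (hf : Feasible N f)
    (e : E) (θ : ℝ) (hθ : 0 ≤ θ) :
    0 ≤ queueOf N f.fplus f.fminus e θ := by
  obtain ⟨_, _, h3, h4⟩ := hf
  set τ := N.time e with hτ
  have hτpos : 0 < τ := N.time_pos e
  have hIp : ∀ a b : ℝ, IntervalIntegrable (f.fplus e) volume a b := fun a b =>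
    (f.fplus_int e a).symm.trans (f.fplus_int e b)
  have hIm : ∀ a b : ℝ, IntervalIntegrable (f.fminus e) volume a b := fun a b =>
    (f.fminus_int e a).symm.trans (f.fminus_int e b)
  set q : ℝ → ℝ := queueOf N f.fplus f.fminus e with hqdef
  have hqcont : Continuous q := by
    have h1 : Continuous fun θ : ℝ => ∫ ζ in (0:ℝ)..θ, f.fplus e ζ :=
      intervalIntegral.continuous_primitive (fun a b => hIp a b) 0
    have h2 : Continuous fun θ : ℝ => ∫ ζ in (0:ℝ)..θ, f.fminus e ζ :=
      intervalIntegral.continuous_primitive (fun a b => hIm a b) 0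
    exact h1.sub (h2.comp (continuous_id.add continuous_const))
  have hq0 : q 0 = 0 := by
    have hae : ∀ᵐ x : ℝ ∂volume, x ∈ Set.uIoc (0:ℝ) τ → f.fminus e x = 0 := by
      have hne : ∀ᵐ x : ℝ ∂volume, x ≠ τ := by
        rw [MeasureTheory.ae_iff]
        simpa using measure_singleton (α := ℝ) (μ := volume) τ
      filter_upwards [hne] with x hx hxmem
      rw [Set.uIoc_of_le hτpos.le] at hxmem
      exact h3 e x hxmem.1.le (lt_of_le_of_ne hxmem.2 hx)
    have : ∫ ζ in (0:ℝ)..τ, f.fminus e ζ = ∫ ζ in (0:ℝ)..τ, (0:ℝ) :=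
      intervalIntegral.integral_congr_ae hae
    simp only [hqdef, queueOf, intervalIntegral.integral_same, zero_add, ← hτ]
    rw [this]
    simp
  by_contra hneg
  push_neg at hneg
  set S : Set ℝ := Set.Icc 0 θ ∩ q ⁻¹' Set.Ici 0 with hSdef
  have hSne : S.Nonempty := ⟨0, ⟨le_refl 0, hθ⟩, by simp [hq0]⟩
  have hSbdd : BddAbove S := ⟨θ, fun x hx => hx.1.2⟩
  have hSclosed : IsClosed S := isClosed_Icc.inter (isClosed_Ici.preimage hqcont)
  set s := sSup S with hsdef
  have hsS : s ∈ S := hSclosed.csSup_mem hSne hSbdd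
  have hs0 : 0 ≤ s := hsS.1.1
  have hsθ : s ≤ θ := hsS.1.2
  have hqs : 0 ≤ q s := hsS.2
  have hsltθ : s < θ := lt_of_le_of_ne hsθ (by intro h; rw [h] at hqs; exact absurd hqs (not_le.2 hneg))
  have hqneg : ∀ x ∈ Set.Ioc s θ, q x < 0 := by
    intro x hx
    by_contra hc
    push_neg at hc
    have hxS : x ∈ S := ⟨⟨hs0.trans hx.1.le, hx.2⟩, hc⟩
    exact absurd (le_csSup hSbdd hxS) (not_le.2 hx.1)
  -- on Ioc s θ, fminus (x + τ) ≤ fplus x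
  have hbound : ∀ x ∈ Set.Ioc s θ, f.fminus e (x + τ) ≤ f.fplus e x := by
    intro x hx
    have h0x : 0 ≤ x := hs0.trans hx.1.le
    have := h4 e x h0x
    rw [if_neg (not_lt.2 (hqneg x hx).le)] at this
    rw [← hτ] at this
    rw [this]
    exact min_le_left _ _
  have haebound : ∀ᵐ x ∂(volume.restrict (Set.Icc s θ)),
      f.fminus e (x + τ) ≤ f.fplus e x := by
    have hne : ∀ᵐ x : ℝ ∂(volume.restrict (Set.Icc s θ)), x ≠ s := by
      rw [MeasureTheory.ae_iff]
      refine measure_mono_null (fun x hx => ?_) (measure_singleton (α := ℝ) s)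
      simp only [Set.mem_setOf_eq, not_not] at hx
      simpa using hx
    filter_upwards [hne, MeasureTheory.ae_restrict_mem measurableSet_Icc] with x hx hmem
    exact hbound x ⟨lt_of_le_of_ne hmem.1 (Ne.symm hx), hmem.2⟩
  have hImshift : IntervalIntegrable (fun x => f.fminus e (x + τ)) volume s θ := by
    have := (hIm (s + τ) (θ + τ)).comp_add_right τ
    simpa using this
  have hmono : ∫ x in s..θ, f.fminus e (x + τ) ≤ ∫ x in s..θ, f.fplus e x :=
    intervalIntegral.integral_mono_ae_restrict hsltθ.le hImshift (hIp s θ) haebound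
  have hshift : ∫ x in s..θ, f.fminus e (x + τ) = ∫ x in (s+τ)..(θ+τ), f.fminus e x :=
    intervalIntegral.integral_comp_add_right _ τ
  have hp : (∫ ζ in (0:ℝ)..s, f.fplus e ζ) + ∫ ζ in s..θ, f.fplus e ζ
      = ∫ ζ in (0:ℝ)..θ, f.fplus e ζ :=
    intervalIntegral.integral_add_adjacent_intervals (hIp 0 s) (hIp s θ)
  have hm : (∫ ζ in (0:ℝ)..(s+τ), f.fminus e ζ) + ∫ ζ in (s+τ)..(θ+τ), f.fminus e ζ
      = ∫ ζ in (0:ℝ)..(θ+τ), f.fminus e ζ :=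
    intervalIntegral.integral_add_adjacent_intervals (hIm 0 (s+τ)) (hIm (s+τ) (θ+τ))
  have hqθ : q θ = q s + ((∫ ζ in s..θ, f.fplus e ζ) - ∫ x in (s+τ)..(θ+τ), f.fminus e x) := by
    simp only [hqdef, queueOf, ← hτ]
    linarith [hp, hm]
  rw [hshift] at hmono
  linarith

/-- If every node label of a feasible flow is `L`-Lipschitz on `ℝ≥0`,
an edge `e = xy` is active at time `θ'` and `ℓ_x(θ) < ℓ_y(θ)` at a later time `θ > θ'`,
then `θ − θ' ≥ τ_min/(2L)`. -/
theorem active_edge_label_reversal_takes_time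
    {V E : Type} [Fintype V] [DecidableEq V] [Fintype E] [DecidableEq E]
    (N : Network V E) (hbdd : N.BddInflow)
    (f : FlowOverTime N) (hf : Feasible N f)
    (L : ℝ) (hL : 0 < L)
    (hlip : ∀ v : V, ∀ θ θ' : ℝ, 0 ≤ θ → 0 ≤ θ' →
      |labelOf N f.fplus f.fminus v θ - labelOf N f.fplus f.fminus v θ'| ≤ L * |θ - θ'|)
    (e : E) (θ' θ : ℝ) (hθ' : 0 ≤ θ') (hlt : θ' < θ)
    (hact : ActiveOf N f.fplus f.fminus e θ')
    (hrev : labelOf N f.fplus f.fminus (N.tail e) θ < labelOf N f.fplus f.fminus (N.head e) θ) :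
    N.tauMin / (2 * L) ≤ θ - θ' := by
  have hθ0 : 0 ≤ θ := hθ'.trans hlt.le
  have hτmin : N.tauMin ≤ N.time e :=
    csInf_le (Set.finite_range N.time).bddBelow ⟨e, rfl⟩
  have hq : 0 ≤ queueOf N f.fplus f.fminus e θ' := queue_nonneg N f hf e θ' hθ'
  have hc : N.time e ≤ ctimeOf N f.fplus f.fminus e θ' := by
    have : 0 ≤ queueOf N f.fplus f.fminus e θ' / N.cap e :=
      div_nonneg hq (N.cap_pos e).le
    unfold ctimeOf; linarith
  have habs : |θ - θ'| = θ - θ' := abs_of_nonneg (by linarith)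
  have h1 := hlip (N.tail e) θ θ' hθ0 hθ'
  have h2 := hlip (N.head e) θ θ' hθ0 hθ'
  rw [habs] at h1 h2
  rw [abs_le] at h1 h2
  rw [div_le_iff₀ (by positivity : (0:ℝ) < 2 * L)]
  unfold ActiveOf at hact
  nlinarith [h1.1, h1.2, h2.1, h2.2]
end

section
/- Let N be a single-sink network, v a node with outgoing edges vw_1, …, vw_p, and f a feasible flow over time such that on an interval [θ1, θ̂): the total outflow Σ_{i=1}^p f⁺_{vw_i}(ζ) from v is constant; each f⁺_{vw_i} is right-constant and piecewise constant with finitely many pieces; each label function ℓ_{w_i} is affine; and f⁺_{vw_i}(ζ) > 0 implies h_i(ζ) = min_j h_j(ζ), where h_i(ζ) := τ_{vw_i} + q_{vw_i}(ζ)/ν_{vw_i} + ℓ_{w_i}(ζ). Set ℓ_v := min_i h_i and I(θ) := {i : h_i(θ) = ℓ_v(θ)}. Then the functions h_i and ℓ_v are continuous and piecewise linear on [θ1, θ̂), possessing one-sided derivatives everywhere in (θ1, θ̂), and for every θ ∈ (θ1, θ̂): (1) min{∂⁻h_i(θ) : i ∈ I(θ)} ≤ ∂⁺ℓ_v(θ);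 and (2) if moreover every edge vw_i that is active immediately after θ (i.e. i ∈ I(θ) with ∂⁺h_i(θ) = ∂⁺ℓ_v(θ)) was also active immediately before θ (i.e. h_i = ℓ_v on some left neighbourhood of θ), then ∂⁻ℓ_v(θ) ≤ ∂⁺ℓ_v(θ). -/
/-!
On an interval where the inflow rate `a` into an edge is constant, its queue evolves as
`q ζ = max (q t₀ + (a - ν) (ζ - t₀)) 0`. Hence every `h_i` is piecewise affine, and so is their
minimum `ℓ_v`. Near a point `θ` each `h_i` is affine on either side, its left slope being at most
its right slope whenever the inflow rate into `vw_i` does not drop at `θ`; and on either side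
`ℓ_v` coincides with one of the `h_i`. Edges carrying flow at `θ` are active just after `θ`, and
since the total outflow of `v` is constant, on one of these edges `vw_j` the inflow rate does not
drop at `θ`. Thus `∂⁻h_j(θ) ≤ ∂⁺h_j(θ) = ∂⁺ℓ_v(θ)`, which is claim (1); under the hypothesis of
claim (2), `ℓ_v = h_j` just before `θ`, so `∂⁻ℓ_v(θ) = ∂⁻h_j(θ)` as well.
-/

open MeasureTheory Set

variable {V E : Type} [Fintype V] [DecidableEq V] [Fintype E] [DecidableEq E]

/-- The function `h_i(ζ) = τ_{vw_i} + q_{vw_i}(ζ)/ν_{vw_i} + ℓ_{w_i}(ζ)`: the shortest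
instantaneous travel time to the sink for a particle entering edge `vw_i` at time `ζ`,
given the label functions `ℓw i` of the heads. -/
noncomputable def hFun {V E : Type} [Fintype V] [DecidableEq V] [Fintype E] [DecidableEq E]
    {p : ℕ} (N : Network V E) (f : FlowOverTime N) (ed : Fin p → E) (ℓw : Fin p → ℝ → ℝ)
    (i : Fin p) (ζ : ℝ) : ℝ :=
  N.time (ed i) + queueOf N f.fplus f.fminus (ed i) ζ / N.cap (ed i) + ℓw i ζ

/-- The function `ℓ_v = min_i h_i`. -/
noncomputable def lvFun {V E : Type} [Fintype V] [DecidableEq V] [Fintype E] [DecidableEq E]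
    {p : ℕ} (N : Network V E) (f : FlowOverTime N) (ed : Fin p → E) (ℓw : Fin p → ℝ → ℝ)
    (ζ : ℝ) : ℝ :=
  ⨅ i : Fin p, hFun N f ed ℓw i ζ

open Filter Topology

lemma IsClosed.exists_last_mem {C : Set ℝ} (hC : IsClosed C) {a b : ℝ} (hab : a ≤ b)
    (ha : a ∈ C) : ∃ σ ∈ Icc a b, σ ∈ C ∧ ∀ s ∈ Ioc σ b, s ∉ C := by
  have hS : IsCompact (C ∩ Icc a b) := isCompact_Icc.inter_left hC
  obtain ⟨hσC, hσ⟩ := hS.sSup_mem ⟨a, ha, left_mem_Icc.2 hab⟩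
  exact ⟨_, hσ, hσC, fun s hs hsC =>
    (le_csSup hS.bddAbove ⟨hsC, hσ.1.trans hs.1.le, hs.2⟩).not_gt hs.1⟩

lemma le_intervalIntegral_of_forall_Ioo {F : ℝ → ℝ} {a b c : ℝ} (hab : a ≤ b)
    (hF : IntervalIntegrable F volume a b) (h : ∀ x ∈ Ioo a b, c ≤ F x) :
    c * (b - a) ≤ ∫ x in a..b, F x := by
  rw [intervalIntegral.integral_of_le hab, integral_Ioc_eq_integral_Ioo]
  have := setIntegral_ge_of_const_le measurableSet_Ioo measure_Ioo_lt_top.ne h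
    (hF.1.mono_set Ioo_subset_Ioc_self)
  rwa [Real.volume_real_Ioo_of_le hab, smul_eq_mul, mul_comm] at this

lemma intervalIntegral_eq_of_forall_Ioo {F : ℝ → ℝ} {a b c : ℝ} (hab : a ≤ b)
    (h : ∀ x ∈ Ioo a b, F x = c) : ∫ x in a..b, F x = c * (b - a) := by
  rw [intervalIntegral.integral_of_le hab, integral_Ioc_eq_integral_Ioo,
    setIntegral_congr_fun measurableSet_Ioo h, setIntegral_const,
    Real.volume_real_Ioo_of_le hab, smul_eq_mul, mul_comm]

lemma tendsto_sub_nhdsGE_zero (θ : ℝ) : Tendsto (fun ζ => ζ - θ) (𝓝[≥] θ) (𝓝[≥] 0) :=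
  tendsto_nhdsWithin_iff.2
    ⟨((continuous_sub_right θ).tendsto' θ 0 (sub_self θ)).mono_left nhdsWithin_le_nhds,
      eventually_mem_nhdsWithin.mono fun _ hζ => mem_Ici.2 (sub_nonneg.2 hζ)⟩

lemma tendsto_sub_nhdsLE_zero (θ : ℝ) : Tendsto (fun ζ => θ - ζ) (𝓝[≤] θ) (𝓝[≥] 0) :=
  tendsto_nhdsWithin_iff.2
    ⟨((continuous_sub_left θ).tendsto' θ 0 (sub_self θ)).mono_left nhdsWithin_le_nhds,
      eventually_mem_nhdsWithin.mono fun _ hζ => mem_Ici.2 (sub_nonneg.2 hζ)⟩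

lemma tendsto_affine_nhdsGE_zero (c s : ℝ) :
    Tendsto (fun x => c + s * x) (𝓝[≥] (0 : ℝ)) (𝓝 c) := by
  have : Tendsto (fun x => c + s * x) (𝓝 (0 : ℝ)) (𝓝 (c + s * 0)) :=
    (continuous_const.add (continuous_const_mul s)).tendsto 0
  simpa using this.mono_left nhdsWithin_le_nhds

lemma exists_eventually_max_affine_zero (c s : ℝ) :
    ∃ σ, (if 0 < c then s else 0) ≤ σ ∧
      ∀ᶠ x in 𝓝[≥] (0 : ℝ), max (c + s * x) 0 = max c 0 + σ * x := by
  rcases lt_trichotomy c 0 with hc | rfl | hc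
  · refine ⟨0, by simp [hc.not_gt], ?_⟩
    filter_upwards [(tendsto_affine_nhdsGE_zero c s).eventually_lt_const hc] with x hx
    rw [max_eq_right hx.le, max_eq_right hc.le]
    ring
  · refine ⟨max s 0, by simp, ?_⟩
    filter_upwards [self_mem_nhdsWithin] with x (hx : 0 ≤ x)
    simp [max_mul_of_nonneg _ _ hx]
  · refine ⟨s, by simp [hc], ?_⟩
    filter_upwards [(tendsto_affine_nhdsGE_zero c s).eventually_const_lt hc] with x hx
    rw [max_eq_left hx.le, max_eq_left hc.le]

/-- Minimising `(c i, s i)` lexicographically picks the affine map that is smallest just to the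
right of `0`. -/
lemma exists_eventually_forall_affine_le {ι : Type*} [Finite ι] [Nonempty ι] (c s : ι → ℝ) :
    ∃ j, ∀ᶠ x in 𝓝[≥] (0 : ℝ), ∀ i, c j + s j * x ≤ c i + s i * x := by
  obtain ⟨j, hj⟩ := Finite.exists_min fun i => toLex (c i, s i)
  refine ⟨j, eventually_all.2 fun i => ?_⟩
  rcases Prod.Lex.le_iff.1 (hj i) with hlt | ⟨heq, hle⟩
  · exact ((tendsto_affine_nhdsGE_zero _ _).eventually_lt
      (tendsto_affine_nhdsGE_zero _ _) hlt).mono fun _ h => h.le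
  · filter_upwards [self_mem_nhdsWithin] with x (hx : 0 ≤ x)
    simp only [ofLex_toLex] at heq hle
    rw [heq]
    exact add_le_add_right (mul_le_mul_of_nonneg_right hle hx) _

lemma exists_iInf_eventuallyEq_of_tendsto {ι : Type*} [Finite ι] [Nonempty ι] {l : Filter ℝ}
    {φ : ℝ → ℝ} (hφ : Tendsto φ l (𝓝[≥] 0)) {h : ι → ℝ → ℝ} (c s : ι → ℝ)
    (hh : ∀ i, ∀ᶠ ζ in l, h i ζ = c i + s i * φ ζ) :
    ∃ j, (fun ζ => ⨅ i, h i ζ) =ᶠ[l] h j := by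
  obtain ⟨j, hj⟩ := exists_eventually_forall_affine_le c s
  refine ⟨j, ?_⟩
  filter_upwards [hφ.eventually hj, eventually_all.2 hh] with ζ hle heq
  refine le_antisymm (ciInf_le (Finite.bddBelow_range _) j) (le_ciInf fun i => ?_)
  rw [heq, heq]
  exact hle i

lemma exists_iInf_eventuallyEq_nhdsGE {ι : Type*} [Finite ι] [Nonempty ι] {h : ι → ℝ → ℝ}
    {M : ι → ℝ} {θ : ℝ} (hh : ∀ i, ∀ᶠ ζ in 𝓝[≥] θ, h i ζ = h i θ + M i * (ζ - θ)) :
    ∃ j, (fun ζ => ⨅ i, h i ζ) =ᶠ[𝓝[≥] θ] h j :=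
  exists_iInf_eventuallyEq_of_tendsto (tendsto_sub_nhdsGE_zero θ) _ _ hh

lemma exists_iInf_eventuallyEq_nhdsLE {ι : Type*} [Finite ι] [Nonempty ι] {h : ι → ℝ → ℝ}
    {M : ι → ℝ} {θ : ℝ} (hh : ∀ i, ∀ᶠ ζ in 𝓝[≤] θ, h i ζ = h i θ + M i * (ζ - θ)) :
    ∃ j, (fun ζ => ⨅ i, h i ζ) =ᶠ[𝓝[≤] θ] h j :=
  exists_iInf_eventuallyEq_of_tendsto (tendsto_sub_nhdsLE_zero θ) (fun i => h i θ)
    (fun i => -M i) fun i => (hh i).mono fun ζ hζ => by rw [hζ]; ring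

lemma hasDerivWithinAt_of_eventually_eq_affine {g : ℝ → ℝ} {s : Set ℝ} {θ m : ℝ}
    (h : ∀ᶠ ζ in 𝓝[s] θ, g ζ = g θ + m * (ζ - θ)) : HasDerivWithinAt g m s θ := by
  have : HasDerivAt (fun ζ => g θ + m * (ζ - θ)) m θ := by
    simpa using (((hasDerivAt_id θ).sub_const θ).const_mul m).const_add (g θ)
  exact this.hasDerivWithinAt.congr_of_eventuallyEq h (by simp)

lemma continuousOn_iInf {ι : Type*} [Fintype ι] [Nonempty ι] {h : ι → ℝ → ℝ} {S : Set ℝ}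
    (hh : ∀ i, ContinuousOn (h i) S) : ContinuousOn (fun ζ => ⨅ i, h i ζ) S := by
  simpa only [Finset.inf'_univ_eq_ciInf] using
    ContinuousOn.finset_inf'_apply Finset.univ_nonempty fun i _ => hh i

lemma exists_and_le_of_sum_eq {ι : Type*} [Fintype ι] {P : ι → Prop} {a b : ι → ℝ}
    (hP : ∃ i, P i) (ha : ∀ i, 0 ≤ a i) (hb : ∀ i, ¬ P i → b i = 0)
    (hab : ∑ i, a i = ∑ i, b i) : ∃ i, P i ∧ a i ≤ b i := by
  by_contra! H
  obtain ⟨i, hi⟩ := hP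
  have : ∑ j, b j < ∑ j, a j := by
    refine Finset.sum_lt_sum (fun j _ => ?_) ⟨i, Finset.mem_univ _, H i hi⟩
    by_cases hj : P j
    · exact (H j hj).le
    · exact (hb j hj).symm ▸ ha j
  linarith

lemma exists_lt_mem_Ico_of_mem_Ico {t : ℕ → ℝ} {n : ℕ} {θ : ℝ} (hθ : θ ∈ Ico (t 0) (t n)) :
    ∃ j < n, θ ∈ Ico (t j) (t (j + 1)) := by
  obtain ⟨j, hj, hj1⟩ := Nat.exists_not_and_succ_of_not_zero_of_exists
    (p := fun k => θ < t (min k n)) (by simpa using hθ.1) ⟨n, by simpa using hθ.2⟩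
  have hjn : j < n := lt_of_not_ge fun h => hj (by simpa [min_eq_right h] using hθ.2)
  simp only [min_eq_left hjn.le, min_eq_left (Nat.succ_le_of_lt hjn)] at hj hj1
  exact ⟨j, hjn, not_lt.1 hj, hj1⟩

lemma exists_lt_mem_Ioc_of_mem_Ioc {t : ℕ → ℝ} {n : ℕ} {θ : ℝ} (hθ : θ ∈ Ioc (t 0) (t n)) :
    ∃ j < n, θ ∈ Ioc (t j) (t (j + 1)) := by
  obtain ⟨j, hj, hj1⟩ := Nat.exists_not_and_succ_of_not_zero_of_exists
    (p := fun k => θ ≤ t (min k n)) (by simpa using hθ.1) ⟨n, by simpa using hθ.2⟩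
  have hjn : j < n := lt_of_not_ge fun h => hj (by simpa [min_eq_right h] using hθ.2)
  simp only [min_eq_left hjn.le, min_eq_left (Nat.succ_le_of_lt hjn)] at hj hj1
  exact ⟨j, hjn, not_le.1 hj, hj1⟩

section Queue

variable {N : Network V E}

lemma FlowOverTime.intervalIntegrable_fplus (f : FlowOverTime N) (e : E) (a b : ℝ) :
    IntervalIntegrable (f.fplus e) volume a b :=
  (f.fplus_int e a).symm.trans (f.fplus_int e b)

lemma FlowOverTime.intervalIntegrable_fminus (f : FlowOverTime N) (e : E) (a b : ℝ) :
    IntervalIntegrable (f.fminus e) volume a b :=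
  (f.fminus_int e a).symm.trans (f.fminus_int e b)

lemma FlowOverTime.intervalIntegrable_fminus_add_time (f : FlowOverTime N) (e : E) (a b : ℝ) :
    IntervalIntegrable (fun s => f.fminus e (s + N.time e)) volume a b := by
  simpa using (f.intervalIntegrable_fminus e (a + N.time e) (b + N.time e)).comp_add_right
    (N.time e)

variable {f : FlowOverTime N}

lemma queueOf_continuous (e : E) : Continuous (queueOf N f.fplus f.fminus e) :=
  (intervalIntegral.continuous_primitive (f.intervalIntegrable_fplus e) 0).sub
    ((intervalIntegral.continuous_primitive (f.intervalIntegrable_fminus e) 0).comp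
      (continuous_add_const _))

lemma queueOf_sub (e : E) (σ ζ : ℝ) :
    queueOf N f.fplus f.fminus e ζ - queueOf N f.fplus f.fminus e σ =
      ∫ s in σ..ζ, (f.fplus e s - f.fminus e (s + N.time e)) := by
  rw [intervalIntegral.integral_sub (f.intervalIntegrable_fplus e σ ζ)
      (f.intervalIntegrable_fminus_add_time e σ ζ),
    intervalIntegral.integral_comp_add_right,
    ← intervalIntegral.integral_interval_sub_left (f.intervalIntegrable_fplus e 0 ζ)
      (f.intervalIntegrable_fplus e 0 σ),
    ← intervalIntegral.integral_interval_sub_left (f.intervalIntegrable_fminus e 0 _)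
      (f.intervalIntegrable_fminus e 0 _)]
  unfold queueOf
  ring

lemma le_queueOf_sub (e : E) {σ ζ c : ℝ} (hσζ : σ ≤ ζ)
    (h : ∀ s ∈ Ioo σ ζ, c ≤ f.fplus e s - f.fminus e (s + N.time e)) :
    c * (ζ - σ) ≤ queueOf N f.fplus f.fminus e ζ - queueOf N f.fplus f.fminus e σ := by
  rw [queueOf_sub]
  exact le_intervalIntegral_of_forall_Ioo hσζ
    ((f.intervalIntegrable_fplus e σ ζ).sub (f.intervalIntegrable_fminus_add_time e σ ζ)) h

lemma queueOf_sub_eq (e : E) {σ ζ c : ℝ} (hσζ : σ ≤ ζ)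
    (h : ∀ s ∈ Ioo σ ζ, f.fplus e s - f.fminus e (s + N.time e) = c) :
    queueOf N f.fplus f.fminus e ζ - queueOf N f.fplus f.fminus e σ = c * (ζ - σ) := by
  rw [queueOf_sub, intervalIntegral_eq_of_forall_Ioo hσζ h]

lemma queueOf_zero (hf : Feasible N f) (e : E) : queueOf N f.fplus f.fminus e 0 = 0 := by
  unfold queueOf
  rw [intervalIntegral.integral_same, zero_add, intervalIntegral_eq_of_forall_Ioo (c := 0)
    (N.time_pos e).le fun s hs => hf.2.2.1 e s hs.1.le hs.2]
  ring

lemma fminus_le_cap (hf : Feasible N f) (e : E) {s : ℝ} (hs : 0 ≤ s) :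
    f.fminus e (s + N.time e) ≤ N.cap e := by
  rw [hf.2.2.2 e s hs]
  split_ifs
  exacts [le_rfl, min_le_right _ _]

lemma fminus_le_fplus (hf : Feasible N f) (e : E) {s : ℝ} (hs : 0 ≤ s)
    (hq : ¬ 0 < queueOf N f.fplus f.fminus e s) : f.fminus e (s + N.time e) ≤ f.fplus e s := by
  rw [hf.2.2.2 e s hs, if_neg hq]
  exact min_le_left _ _

lemma fminus_eq_cap (hf : Feasible N f) (e : E) {s : ℝ} (hs : 0 ≤ s)
    (hq : 0 < queueOf N f.fplus f.fminus e s) : f.fminus e (s + N.time e) = N.cap e := by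
  rw [hf.2.2.2 e s hs, if_pos hq]

/-- While the queue is negative nothing leaves faster than it enters, so it cannot decrease;
looking back to the last time it was nonnegative shows that it never becomes negative. -/
lemma queueOf_nonneg (hf : Feasible N f) (e : E) {ζ : ℝ} (hζ : 0 ≤ ζ) :
    0 ≤ queueOf N f.fplus f.fminus e ζ := by
  have hC : IsClosed {s | 0 ≤ queueOf N f.fplus f.fminus e s} :=
    isClosed_le continuous_const (queueOf_continuous e)
  obtain ⟨σ, hσ, hσC, hlast⟩ := hC.exists_last_mem hζ (queueOf_zero hf e).ge
  have := le_queueOf_sub e hσ.2 (c := 0) fun s hs => sub_nonneg.2 <|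
    fminus_le_fplus hf e (hσ.1.trans hs.1.le) fun hpos => hlast s ⟨hs.1, hs.2.le⟩ hpos.le
  linarith [show 0 ≤ queueOf N f.fplus f.fminus e σ from hσC]

lemma queueOf_ge (hf : Feasible N f) (e : E) {t₀ ζ a : ℝ} (ht₀ : 0 ≤ t₀) (hζ : t₀ ≤ ζ)
    (ha : ∀ s ∈ Ico t₀ ζ, f.fplus e s = a) :
    queueOf N f.fplus f.fminus e t₀ + (a - N.cap e) * (ζ - t₀) ≤
      queueOf N f.fplus f.fminus e ζ := by
  have := le_queueOf_sub e hζ (c := a - N.cap e) fun s hs => by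
    rw [ha s ⟨hs.1.le, hs.2⟩]
    linarith [fminus_le_cap hf e (ht₀.trans hs.1.le)]
  linarith

lemma queueOf_eq_max (hf : Feasible N f) (e : E) {t₀ ζ a : ℝ} (ht₀ : 0 ≤ t₀) (hζ : t₀ ≤ ζ)
    (ha : ∀ s ∈ Ico t₀ ζ, f.fplus e s = a) :
    queueOf N f.fplus f.fminus e ζ =
      max (queueOf N f.fplus f.fminus e t₀ + (a - N.cap e) * (ζ - t₀)) 0 := by
  refine le_antisymm ?_ (max_le (queueOf_ge hf e ht₀ hζ ha) (queueOf_nonneg hf e (ht₀.trans hζ)))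
  -- After the last time `σ ∈ [t₀, ζ]` at which the queue is empty (or `σ = t₀`), it grows at
  -- rate exactly `a - ν`.
  have hC : IsClosed ({s | queueOf N f.fplus f.fminus e s ≤ 0} ∪ {t₀}) :=
    (isClosed_le (queueOf_continuous e) continuous_const).union isClosed_singleton
  obtain ⟨σ, hσ, hσC, hlast⟩ := hC.exists_last_mem hζ (Or.inr rfl)
  have hσ0 : 0 ≤ σ := ht₀.trans hσ.1
  have hlin := queueOf_sub_eq e hσ.2 (c := a - N.cap e) fun s hs => by
    rw [ha s ⟨hσ.1.trans hs.1.le, hs.2⟩, fminus_eq_cap hf e (hσ0.trans hs.1.le)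
      (not_le.1 fun h => hlast s ⟨hs.1, hs.2.le⟩ (Or.inl h))]
  rcases hσC with hσq | rfl
  · have hqσ : queueOf N f.fplus f.fminus e σ = 0 := le_antisymm hσq (queueOf_nonneg hf e hσ0)
    have := queueOf_nonneg hf e ht₀
    rcases le_or_gt a (N.cap e) with hcap | hcap
    · exact le_max_of_le_right (by nlinarith [hσ.2])
    · exact le_max_of_le_left (by nlinarith [hσ.1])
  · exact le_max_of_le_left (by linarith)

lemma queueOf_eventually_nhdsGE (hf : Feasible N f) (e : E) {θ : ℝ} (hθ : 0 ≤ θ)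
    (hconst : ∀ᶠ s in 𝓝[≥] θ, f.fplus e s = f.fplus e θ) :
    ∃ sp, (if 0 < queueOf N f.fplus f.fminus e θ then f.fplus e θ - N.cap e else 0) ≤ sp ∧
      ∀ᶠ ζ in 𝓝[≥] θ, queueOf N f.fplus f.fminus e ζ =
        queueOf N f.fplus f.fminus e θ + sp * (ζ - θ) := by
  obtain ⟨u, hu, hsub⟩ := mem_nhdsGE_iff_exists_Ico_subset.1 hconst
  obtain ⟨σ, hσ, hev⟩ :=
    exists_eventually_max_affine_zero (queueOf N f.fplus f.fminus e θ) (f.fplus e θ - N.cap e)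
  refine ⟨σ, hσ, ?_⟩
  filter_upwards [Ico_mem_nhdsGE hu, (tendsto_sub_nhdsGE_zero θ).eventually hev] with ζ hζ hmax
  rw [queueOf_eq_max hf e hθ hζ.1 fun s hs => hsub ⟨hs.1, hs.2.trans hζ.2⟩, hmax,
    max_eq_left (queueOf_nonneg hf e hθ)]

lemma queueOf_eventually_nhdsLE (hf : Feasible N f) (e : E) {θ b : ℝ} (hθ : 0 < θ)
    (hconst : ∀ᶠ s in 𝓝[<] θ, f.fplus e s = b) :
    ∃ sm, sm ≤ (if 0 < queueOf N f.fplus f.fminus e θ then b - N.cap e else 0) ∧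
      ∀ᶠ ζ in 𝓝[≤] θ, queueOf N f.fplus f.fminus e ζ =
        queueOf N f.fplus f.fminus e θ + sm * (ζ - θ) := by
  obtain ⟨t₀, ht₀, hsub⟩ := mem_nhdsLT_iff_exists_Ioo_subset.1
    (hconst.and ((lt_mem_nhds hθ).filter_mono nhdsWithin_le_nhds))
  obtain ⟨t₁, ht₁⟩ := exists_between (show t₀ < θ from ht₀)
  set L := queueOf N f.fplus f.fminus e t₁ + (b - N.cap e) * (θ - t₁) with hL
  have hmax : ∀ ζ ∈ Icc t₁ θ,
      queueOf N f.fplus f.fminus e ζ = max (L + (N.cap e - b) * (θ - ζ)) 0 := by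
    intro ζ hζ
    rw [queueOf_eq_max hf e (hsub ht₁).2.le hζ.1
      fun s hs => (hsub ⟨ht₁.1.trans_le hs.1, hs.2.trans_le hζ.2⟩).1, hL]
    ring_nf
  obtain ⟨σ, hσ, hev⟩ := exists_eventually_max_affine_zero L (N.cap e - b)
  have hqθ : queueOf N f.fplus f.fminus e θ = max L 0 := by
    simpa using hmax θ ⟨ht₁.2.le, le_rfl⟩
  refine ⟨-σ, ?_, ?_⟩
  · by_cases hL : 0 < L
    · simp only [hqθ, lt_max_iff, hL, true_or, if_true] at hσ ⊢
      linarith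
    · simp only [hqθ, lt_max_iff, hL, lt_irrefl, or_false, if_false] at hσ ⊢
      linarith
  · filter_upwards [Icc_mem_nhdsLE ht₁.2, (tendsto_sub_nhdsLE_zero θ).eventually hev] with ζ hζ h
    rw [hmax ζ hζ, h, hqθ]
    ring

end Queue

def IsAffineOn (g : ℝ → ℝ) (S : Set ℝ) : Prop :=
  ∃ m c : ℝ, ∀ ζ ∈ S, g ζ = m * ζ + c

namespace IsAffineOn

variable {g g' : ℝ → ℝ} {S T : Set ℝ}

lemma mono (h : IsAffineOn g S) (hTS : T ⊆ S) : IsAffineOn g T :=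
  let ⟨m, c, h⟩ := h
  ⟨m, c, fun ζ hζ => h ζ (hTS hζ)⟩

lemma congr (h : IsAffineOn g S) (hgg' : EqOn g g' S) : IsAffineOn g' S :=
  let ⟨m, c, h⟩ := h
  ⟨m, c, fun ζ hζ => (hgg' hζ).symm.trans (h ζ hζ)⟩

lemma continuousOn (h : IsAffineOn g S) : ContinuousOn g S := by
  obtain ⟨m, c, h⟩ := h
  exact (continuous_const_mul m |>.add continuous_const).continuousOn.congr h

lemma inf_sup_of_forall_le_or_forall_ge (hg : IsAffineOn g S) (hg' : IsAffineOn g' S)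
    (hcmp : (∀ ζ ∈ S, g ζ ≤ g' ζ) ∨ ∀ ζ ∈ S, g' ζ ≤ g ζ) :
    IsAffineOn (g ⊓ g') S ∧ IsAffineOn (g ⊔ g') S := by
  rcases hcmp with h | h
  · exact ⟨hg.congr fun ζ hζ => (inf_eq_left.2 (h ζ hζ)).symm,
      hg'.congr fun ζ hζ => (sup_eq_right.2 (h ζ hζ)).symm⟩
  · exact ⟨hg'.congr fun ζ hζ => (inf_eq_right.2 (h ζ hζ)).symm,
      hg.congr fun ζ hζ => (sup_eq_left.2 (h ζ hζ)).symm⟩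

/-- Two affine maps cross at most once: split at the crossing point, clamped to `[A, B]`. -/
lemma exists_split_forall_le_or_forall_ge {A B : ℝ} (hAB : A ≤ B) (hg : IsAffineOn g (Ico A B))
    (hg' : IsAffineOn g' (Ico A B)) :
    ∃ M ∈ Icc A B, ((∀ ζ ∈ Ico A M, g ζ ≤ g' ζ) ∨ ∀ ζ ∈ Ico A M, g' ζ ≤ g ζ) ∧
      ((∀ ζ ∈ Ico M B, g ζ ≤ g' ζ) ∨ ∀ ζ ∈ Ico M B, g' ζ ≤ g ζ) := by
  obtain ⟨m, c, hg⟩ := hg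
  obtain ⟨m', c', hg'⟩ := hg'
  by_cases hm : m = m'
  · refine ⟨A, left_mem_Icc.2 hAB, Or.inl (by simp), ?_⟩
    rcases le_total c c' with h | h
    · exact Or.inl fun ζ hζ => by rw [hg ζ hζ, hg' ζ hζ, hm]; linarith
    · exact Or.inr fun ζ hζ => by rw [hg ζ hζ, hg' ζ hζ, hm]; linarith
  set r := (c' - c) / (m - m')
  have hr : (m - m') * r = c' - c := by
    simp only [r]
    field_simp [sub_ne_zero.2 hm]
  have hcmp : ∀ J ⊆ Ico A B, ((∀ ζ ∈ J, ζ ≤ r) ∨ ∀ ζ ∈ J, r ≤ ζ) →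
      (∀ ζ ∈ J, g ζ ≤ g' ζ) ∨ ∀ ζ ∈ J, g' ζ ≤ g ζ := by
    intro J hJ hside
    have hd : ∀ ζ ∈ J, g ζ - g' ζ = (m - m') * (ζ - r) := fun ζ hζ => by
      rw [hg ζ (hJ hζ), hg' ζ (hJ hζ)]
      linear_combination hr
    rcases hside with hs | hs <;> rcases le_total (m - m') 0 with hk | hk
    · exact Or.inr fun ζ hζ => by nlinarith [hd ζ hζ, hs ζ hζ]
    · exact Or.inl fun ζ hζ => by nlinarith [hd ζ hζ, hs ζ hζ]
    · exact Or.inl fun ζ hζ => by nlinarith [hd ζ hζ, hs ζ hζ]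
    · exact Or.inr fun ζ hζ => by nlinarith [hd ζ hζ, hs ζ hζ]
  refine ⟨max A (min r B), ⟨le_max_left _ _, max_le hAB (min_le_right _ _)⟩,
    hcmp _ (Ico_subset_Ico_right (max_le hAB (min_le_right _ _))) (Or.inl fun ζ hζ => ?_),
    hcmp _ (Ico_subset_Ico_left (le_max_left _ _)) (Or.inr fun ζ hζ => ?_)⟩
  · rcases lt_max_iff.1 hζ.2 with h | h
    · exact absurd hζ.1 h.not_ge
    · exact (h.trans_le (min_le_left _ _)).le
  · rcases min_le_iff.1 ((le_max_right _ _).trans hζ.1) with h | h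
    · exact h
    · exact absurd hζ.2 h.not_gt

end IsAffineOn

inductive PiecewiseAffineOn (g : ℝ → ℝ) : ℝ → ℝ → Prop
  | refl (A : ℝ) : PiecewiseAffineOn g A A
  | cons {A M B : ℝ} : A < M → IsAffineOn g (Ico A M) → PiecewiseAffineOn g M B →
      PiecewiseAffineOn g A B

namespace PiecewiseAffineOn

variable {g g' : ℝ → ℝ} {A M B : ℝ}

lemma le (h : PiecewiseAffineOn g A B) : A ≤ B := by
  induction h with
  | refl => exact le_rfl
  | cons hAM _ _ ih => exact hAM.le.trans ih

lemma of_isAffineOn (hAB : A ≤ B) (hg : IsAffineOn g (Ico A B)) : PiecewiseAffineOn g A B := by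
  rcases hAB.eq_or_lt with rfl | hlt
  exacts [refl A, cons hlt hg (refl B)]

lemma trans (h₁ : PiecewiseAffineOn g A M) (h₂ : PiecewiseAffineOn g M B) :
    PiecewiseAffineOn g A B := by
  induction h₁ with
  | refl => exact h₂
  | cons hAM hg _ ih => exact cons hAM hg (ih h₂)

lemma congr (h : PiecewiseAffineOn g A B) (hgg' : EqOn g g' (Ico A B)) :
    PiecewiseAffineOn g' A B := by
  induction h with
  | refl A => exact refl A
  | cons hAM hg hrest ih =>
    exact cons hAM (hg.congr fun ζ hζ => hgg' ⟨hζ.1, hζ.2.trans_le hrest.le⟩)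
      (ih fun ζ hζ => hgg' ⟨hAM.le.trans hζ.1, hζ.2⟩)

lemma split (h : PiecewiseAffineOn g A B) (hAM : A ≤ M) (hMB : M ≤ B) :
    PiecewiseAffineOn g A M ∧ PiecewiseAffineOn g M B := by
  induction h generalizing M with
  | refl A =>
    obtain rfl := le_antisymm hMB hAM
    exact ⟨refl _, refl _⟩
  | @cons A M' B hAM' hg hrest ih =>
    rcases le_total M M' with h | h
    · exact ⟨of_isAffineOn hAM (hg.mono (Ico_subset_Ico_right h)),
        (of_isAffineOn h (hg.mono (Ico_subset_Ico_left hAM))).trans hrest⟩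
    · obtain ⟨h₁, h₂⟩ := ih h hMB
      exact ⟨cons hAM' hg h₁, h₂⟩

lemma inf_sup_of_isAffineOn (hAB : A ≤ B) (hg : IsAffineOn g (Ico A B))
    (hg' : IsAffineOn g' (Ico A B)) :
    PiecewiseAffineOn (g ⊓ g') A B ∧ PiecewiseAffineOn (g ⊔ g') A B := by
  obtain ⟨M, hM, h₁, h₂⟩ := hg.exists_split_forall_le_or_forall_ge hAB hg'
  obtain ⟨hinf₁, hsup₁⟩ := (hg.mono (Ico_subset_Ico_right hM.2)).inf_sup_of_forall_le_or_forall_ge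
    (hg'.mono (Ico_subset_Ico_right hM.2)) h₁
  obtain ⟨hinf₂, hsup₂⟩ := (hg.mono (Ico_subset_Ico_left hM.1)).inf_sup_of_forall_le_or_forall_ge
    (hg'.mono (Ico_subset_Ico_left hM.1)) h₂
  exact ⟨(of_isAffineOn hM.1 hinf₁).trans (of_isAffineOn hM.2 hinf₂),
    (of_isAffineOn hM.1 hsup₁).trans (of_isAffineOn hM.2 hsup₂)⟩

lemma inf_of_isAffineOn (hg : IsAffineOn g (Ico A B)) (h' : PiecewiseAffineOn g' A B) :
    PiecewiseAffineOn (g ⊓ g') A B := by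
  induction h' with
  | refl A => exact refl A
  | cons hAM hg' hrest ih =>
    exact (inf_sup_of_isAffineOn hAM.le (hg.mono (Ico_subset_Ico_right hrest.le)) hg').1.trans
      (ih (hg.mono (Ico_subset_Ico_left hAM.le)))

lemma inf (h : PiecewiseAffineOn g A B) (h' : PiecewiseAffineOn g' A B) :
    PiecewiseAffineOn (g ⊓ g') A B := by
  induction h with
  | refl A => exact refl A
  | cons hAM hg hrest ih =>
    obtain ⟨h₁, h₂⟩ := h'.split hAM.le hrest.le
    exact (inf_of_isAffineOn hg h₁).trans (ih h₂)

lemma iInf {ι : Type*} [Fintype ι] [Nonempty ι] {g : ι → ℝ → ℝ}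
    (h : ∀ i, PiecewiseAffineOn (g i) A B) : PiecewiseAffineOn (fun ζ => ⨅ i, g i ζ) A B := by
  have hinf : (fun ζ => ⨅ i, g i ζ) = Finset.univ.inf' Finset.univ_nonempty g := by
    ext ζ
    rw [Finset.inf'_apply, Finset.inf'_univ_eq_ciInf]
  rw [hinf]
  exact Finset.inf'_induction _ _ (p := fun φ => PiecewiseAffineOn φ A B)
    (fun _ h₁ _ h₂ => h₁.inf h₂) fun i _ => h i

lemma of_partition {n : ℕ} {t : ℕ → ℝ} (h : ∀ j < n, PiecewiseAffineOn g (t j) (t (j + 1))) :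
    PiecewiseAffineOn g (t 0) (t n) := by
  induction n with
  | zero => exact refl _
  | succ n ih => exact (ih fun j hj => h j (by omega)).trans (h n (by omega))

lemma exists_partition (h : PiecewiseAffineOn g A B) :
    ∃ (n : ℕ) (t : ℕ → ℝ), t 0 = A ∧ t n = B ∧ (∀ j, j < n → t j < t (j + 1)) ∧
      ∀ j, j < n → IsAffineOn g (Ico (t j) (t (j + 1))) := by
  induction h with
  | refl A => exact ⟨0, fun _ => A, rfl, rfl, by simp, by simp⟩
  | @cons A M B hAM hg _ ih =>
    obtain ⟨n, t, h0, hn, hlt, haff⟩ := ih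
    refine ⟨n + 1, fun k => if k = 0 then A else t (k - 1), rfl, by simpa using hn,
      fun j hj => ?_, fun j hj => ?_⟩
    · rcases j with _ | j
      · simpa [h0] using hAM
      · simpa using hlt j (by omega)
    · rcases j with _ | j
      · simpa [h0] using hg
      · simpa using haff j (by omega)

end PiecewiseAffineOn

def IsStepFunctionOn (g : ℝ → ℝ) (A B : ℝ) : Prop :=
  ∃ (n : ℕ) (t : ℕ → ℝ), t 0 = A ∧ t n = B ∧ (∀ j, j < n → t j < t (j + 1)) ∧
    ∀ j, j < n → ∀ ζ ∈ Ico (t j) (t (j + 1)), g ζ = g (t j)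

namespace IsStepFunctionOn

variable {g : ℝ → ℝ} {A B θ : ℝ}

lemma eventually_nhdsGE (h : IsStepFunctionOn g A B) (hθ : θ ∈ Ico A B) :
    ∀ᶠ ζ in 𝓝[≥] θ, g ζ = g θ := by
  obtain ⟨n, t, rfl, rfl, -, hconst⟩ := h
  obtain ⟨j, hj, hθj⟩ := exists_lt_mem_Ico_of_mem_Ico hθ
  filter_upwards [Ico_mem_nhdsGE hθj.2] with ζ hζ
  rw [hconst j hj ζ ⟨hθj.1.trans hζ.1, hζ.2⟩, hconst j hj θ hθj]

lemma exists_eventually_nhdsLT (h : IsStepFunctionOn g A B) (hθ : θ ∈ Ioc A B) :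
    ∃ b, ∀ᶠ ζ in 𝓝[<] θ, g ζ = b := by
  obtain ⟨n, t, rfl, rfl, -, hconst⟩ := h
  obtain ⟨j, hj, hθj⟩ := exists_lt_mem_Ioc_of_mem_Ioc hθ
  refine ⟨g (t j), ?_⟩
  filter_upwards [Ioo_mem_nhdsLT hθj.1] with ζ hζ
  exact hconst j hj ζ ⟨hζ.1.le, hζ.2.trans_le hθj.2⟩

end IsStepFunctionOn

section Labels

variable {N : Network V E} {f : FlowOverTime N} {p : ℕ} {ed : Fin p → E} {ℓw : Fin p → ℝ → ℝ}
  {θ1 θhat θ : ℝ}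

lemma hFun_continuousOn {i : Fin p} (hℓ : IsAffineOn (ℓw i) (Ico θ1 θhat)) :
    ContinuousOn (hFun N f ed ℓw i) (Ico θ1 θhat) :=
  (continuous_const.add ((queueOf_continuous (ed i)).div_const _)).continuousOn.add
    hℓ.continuousOn

/-- Under a constant inflow rate the queue is the positive part of an affine function, so
`h_i` is the maximum of two affine functions. -/
lemma hFun_piecewiseAffineOn_of_const (hf : Feasible N f) {i : Fin p} {A B : ℝ} (hA : 0 ≤ A)
    (hAB : A ≤ B) (hℓ : IsAffineOn (ℓw i) (Ico A B))
    (hconst : ∀ ζ ∈ Ico A B, f.fplus (ed i) ζ = f.fplus (ed i) A) :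
    PiecewiseAffineOn (hFun N f ed ℓw i) A B := by
  obtain ⟨m, c, hmc⟩ := hℓ
  set τ := N.time (ed i)
  set ν := N.cap (ed i)
  set a := f.fplus (ed i) A
  set q₀ := queueOf N f.fplus f.fminus (ed i) A
  have hν : 0 < ν := N.cap_pos _
  have hφ₁ : IsAffineOn (fun ζ => τ + (q₀ + (a - ν) * (ζ - A)) / ν + ℓw i ζ) (Ico A B) :=
    ⟨(a - ν) / ν + m, τ + (q₀ - (a - ν) * A) / ν + c, fun ζ hζ => by
      dsimp only
      rw [hmc ζ hζ]
      field_simp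
      ring⟩
  have hφ₂ : IsAffineOn (fun ζ => τ + ℓw i ζ) (Ico A B) :=
    ⟨m, τ + c, fun ζ hζ => by dsimp only; rw [hmc ζ hζ]; ring⟩
  refine (PiecewiseAffineOn.inf_sup_of_isAffineOn hAB hφ₁ hφ₂).2.congr fun ζ hζ => ?_
  change max _ _ = τ + queueOf N f.fplus f.fminus (ed i) ζ / ν + ℓw i ζ
  rw [queueOf_eq_max hf _ hA hζ.1 fun s hs => hconst s ⟨hs.1, hs.2.trans hζ.2⟩,
    ← max_div_div_right hν.le, zero_div, ← max_add_add_left, ← max_add_add_right, add_zero]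

lemma hFun_piecewiseAffineOn (hf : Feasible N f) {i : Fin p} (hθ1 : 0 ≤ θ1)
    (hℓ : IsAffineOn (ℓw i) (Ico θ1 θhat)) (hstep : IsStepFunctionOn (f.fplus (ed i)) θ1 θhat) :
    PiecewiseAffineOn (hFun N f ed ℓw i) θ1 θhat := by
  obtain ⟨n, t, rfl, rfl, hlt, hconst⟩ := hstep
  have hmono : MonotoneOn t (Iic n) :=
    (strictMonoOn_Iic_of_lt_succ fun j hj => by simpa using hlt j hj).monotoneOn
  refine PiecewiseAffineOn.of_partition fun j hj => ?_
  have h0j : t 0 ≤ t j := hmono (by simp) (by simp [hj.le]) (Nat.zero_le j)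
  have hjn : t (j + 1) ≤ t n := hmono (by simpa using hj) (by simp) hj
  exact hFun_piecewiseAffineOn_of_const hf (hθ1.trans h0j) (hlt j hj).le
    (hℓ.mono (Ico_subset_Ico h0j hjn)) (hconst j hj)

lemma hFun_eventually_eq_of_queueOf {i : Fin p} {l : Filter ℝ} {m c s : ℝ} (hl : l ≤ 𝓝 θ)
    (hθ : θ ∈ Ioo θ1 θhat) (hℓ : ∀ ζ ∈ Ico θ1 θhat, ℓw i ζ = m * ζ + c)
    (hq : ∀ᶠ ζ in l, queueOf N f.fplus f.fminus (ed i) ζ =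
      queueOf N f.fplus f.fminus (ed i) θ + s * (ζ - θ)) :
    ∀ᶠ ζ in l, hFun N f ed ℓw i ζ = hFun N f ed ℓw i θ + (s / N.cap (ed i) + m) * (ζ - θ) := by
  filter_upwards [hq, hl (Ico_mem_nhds hθ.1 hθ.2)] with ζ hqζ hζ
  simp only [hFun]
  rw [hqζ, hℓ ζ hζ, hℓ θ (Ioo_subset_Ico_self hθ)]
  ring

lemma hFun_eventually_affine (hf : Feasible N f) {i : Fin p} (hθ1 : 0 ≤ θ1)
    (hℓ : IsAffineOn (ℓw i) (Ico θ1 θhat)) (hstep : IsStepFunctionOn (f.fplus (ed i)) θ1 θhat)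
    (hθ : θ ∈ Ioo θ1 θhat) :
    ∃ b Mm Mp : ℝ, (∀ᶠ ζ in 𝓝[<] θ, f.fplus (ed i) ζ = b) ∧ (b ≤ f.fplus (ed i) θ → Mm ≤ Mp) ∧
      (∀ᶠ ζ in 𝓝[≤] θ, hFun N f ed ℓw i ζ = hFun N f ed ℓw i θ + Mm * (ζ - θ)) ∧
      ∀ᶠ ζ in 𝓝[≥] θ, hFun N f ed ℓw i ζ = hFun N f ed ℓw i θ + Mp * (ζ - θ) := by
  obtain ⟨m, c, hmc⟩ := hℓ
  obtain ⟨b, hb⟩ := hstep.exists_eventually_nhdsLT ⟨hθ.1, hθ.2.le⟩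
  obtain ⟨sm, hsm, hqL⟩ := queueOf_eventually_nhdsLE hf (ed i) (hθ1.trans_lt hθ.1) hb
  obtain ⟨sp, hsp, hqR⟩ := queueOf_eventually_nhdsGE hf (ed i) (hθ1.trans hθ.1.le)
    (hstep.eventually_nhdsGE (Ioo_subset_Ico_self hθ))
  refine ⟨b, sm / N.cap (ed i) + m, sp / N.cap (ed i) + m, hb, fun hba => ?_,
    hFun_eventually_eq_of_queueOf nhdsWithin_le_nhds hθ hmc hqL,
    hFun_eventually_eq_of_queueOf nhdsWithin_le_nhds hθ hmc hqR⟩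
  have : sm ≤ sp := by split_ifs at hsm hsp <;> linarith
  exact add_le_add_left (div_le_div_of_nonneg_right this (N.cap_pos _).le) m

lemma hFun_eventuallyEq_lvFun {i : Fin p}
    (hmin : ∀ ζ ∈ Ico θ1 θhat, 0 < f.fplus (ed i) ζ → hFun N f ed ℓw i ζ = lvFun N f ed ℓw ζ)
    (hstep : IsStepFunctionOn (f.fplus (ed i)) θ1 θhat) (hθ : θ ∈ Ioo θ1 θhat)
    (hpos : 0 < f.fplus (ed i) θ) : hFun N f ed ℓw i =ᶠ[𝓝[≥] θ] lvFun N f ed ℓw := by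
  filter_upwards [hstep.eventually_nhdsGE (Ioo_subset_Ico_self hθ),
    nhdsWithin_le_nhds (Ico_mem_nhds hθ.1 hθ.2)] with ζ hζ hζI
  exact hmin ζ hζI (hζ ▸ hpos)

/-- The edges used at `θ` are all active just after `θ`, and the constant total outflow cannot
have strictly decreased on every one of them. -/
lemma exists_activeAfter_inflow_le
    (htot : ∃ b : ℝ, ∀ ζ ∈ Ico θ1 θhat, ∑ i : Fin p, f.fplus (ed i) ζ = b)
    (hpc : ∀ i, IsStepFunctionOn (f.fplus (ed i)) θ1 θhat)
    (hmin : ∀ i, ∀ ζ ∈ Ico θ1 θhat, 0 < f.fplus (ed i) ζ →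
      hFun N f ed ℓw i ζ = lvFun N f ed ℓw ζ)
    {b : Fin p → ℝ} (hb : ∀ i, ∀ᶠ ζ in 𝓝[<] θ, f.fplus (ed i) ζ = b i) (hθ : θ ∈ Ioo θ1 θhat)
    (hj₀ : ∃ j, hFun N f ed ℓw j =ᶠ[𝓝[≥] θ] lvFun N f ed ℓw) :
    ∃ j, (hFun N f ed ℓw j θ = lvFun N f ed ℓw θ ∧
      derivWithin (hFun N f ed ℓw j) (Ici θ) θ = derivWithin (lvFun N f ed ℓw) (Ici θ) θ) ∧
      b j ≤ f.fplus (ed j) θ := by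
  have hactive : ∀ j, hFun N f ed ℓw j =ᶠ[𝓝[≥] θ] lvFun N f ed ℓw →
      hFun N f ed ℓw j θ = lvFun N f ed ℓw θ ∧
        derivWithin (hFun N f ed ℓw j) (Ici θ) θ = derivWithin (lvFun N f ed ℓw) (Ici θ) θ :=
    fun j H => ⟨H.self_of_nhdsWithin self_mem_Ici,
      H.derivWithin_eq (H.self_of_nhdsWithin self_mem_Ici)⟩
  obtain ⟨B, hB⟩ := htot
  obtain ⟨ζ, hbζ, hζ⟩ := ((eventually_all.2 hb).and
    (nhdsWithin_le_nhds (Ico_mem_nhds hθ.1 hθ.2))).exists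
  refine exists_and_le_of_sum_eq (hj₀.imp hactive) (fun i => hbζ i ▸ f.fplus_nonneg _ _)
    (fun i hi => ?_) ?_
  · by_contra hne
    exact hi (hactive i (hFun_eventuallyEq_lvFun (hmin i) (hpc i) hθ
      ((f.fplus_nonneg _ _).lt_of_ne' hne)))
  · calc ∑ i, b i = ∑ i, f.fplus (ed i) ζ := by simp only [hbζ]
      _ = ∑ i, f.fplus (ed i) θ := (hB ζ hζ).trans (hB θ (Ioo_subset_Ico_self hθ)).symm

lemma exists_activeAfter_derivWithin_le [Nonempty (Fin p)] (hf : Feasible N f) (hθ1 : 0 ≤ θ1)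
    (haff : ∀ i, IsAffineOn (ℓw i) (Ico θ1 θhat))
    (htot : ∃ b : ℝ, ∀ ζ ∈ Ico θ1 θhat, ∑ i : Fin p, f.fplus (ed i) ζ = b)
    (hpc : ∀ i, IsStepFunctionOn (f.fplus (ed i)) θ1 θhat)
    (hmin : ∀ i, ∀ ζ ∈ Ico θ1 θhat, 0 < f.fplus (ed i) ζ →
      hFun N f ed ℓw i ζ = lvFun N f ed ℓw ζ)
    (hθ : θ ∈ Ioo θ1 θhat) :
    ∃ j, (hFun N f ed ℓw j θ = lvFun N f ed ℓw θ ∧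
      derivWithin (hFun N f ed ℓw j) (Ici θ) θ = derivWithin (lvFun N f ed ℓw) (Ici θ) θ) ∧
      derivWithin (hFun N f ed ℓw j) (Iic θ) θ ≤ derivWithin (lvFun N f ed ℓw) (Ici θ) θ := by
  choose b Mm Mp hb hmono hL hR using fun i => hFun_eventually_affine hf hθ1 (haff i) (hpc i) hθ
  obtain ⟨j₀, hj₀⟩ := exists_iInf_eventuallyEq_nhdsGE hR
  obtain ⟨j, ⟨hjθ, hjR⟩, hbj⟩ :=
    exists_activeAfter_inflow_le htot hpc hmin hb hθ ⟨j₀, hj₀.symm⟩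
  refine ⟨j, ⟨hjθ, hjR⟩, ?_⟩
  rw [← hjR, (hasDerivWithinAt_of_eventually_eq_affine (hL j)).derivWithin
    (uniqueDiffWithinAt_Iic θ), (hasDerivWithinAt_of_eventually_eq_affine (hR j)).derivWithin
    (uniqueDiffWithinAt_Ici θ)]
  exact hmono j hbj

lemma differentiableWithinAt_hFun_lvFun [Nonempty (Fin p)] (hf : Feasible N f) (hθ1 : 0 ≤ θ1)
    (haff : ∀ i, IsAffineOn (ℓw i) (Ico θ1 θhat))
    (hpc : ∀ i, IsStepFunctionOn (f.fplus (ed i)) θ1 θhat) (hθ : θ ∈ Ioo θ1 θhat) :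
    (∀ i, DifferentiableWithinAt ℝ (hFun N f ed ℓw i) (Iic θ) θ ∧
      DifferentiableWithinAt ℝ (hFun N f ed ℓw i) (Ici θ) θ) ∧
    DifferentiableWithinAt ℝ (lvFun N f ed ℓw) (Iic θ) θ ∧
    DifferentiableWithinAt ℝ (lvFun N f ed ℓw) (Ici θ) θ := by
  choose b Mm Mp _ _ hL hR using fun i => hFun_eventually_affine hf hθ1 (haff i) (hpc i) hθ
  have hdL i := (hasDerivWithinAt_of_eventually_eq_affine (hL i)).differentiableWithinAt
  have hdR i := (hasDerivWithinAt_of_eventually_eq_affine (hR i)).differentiableWithinAt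
  obtain ⟨j₁, hj₁⟩ := exists_iInf_eventuallyEq_nhdsLE hL
  obtain ⟨j₀, hj₀⟩ := exists_iInf_eventuallyEq_nhdsGE hR
  exact ⟨fun i => ⟨hdL i, hdR i⟩,
    (hdL j₁).congr_of_eventuallyEq hj₁ (hj₁.self_of_nhdsWithin self_mem_Iic),
    (hdR j₀).congr_of_eventuallyEq hj₀ (hj₀.self_of_nhdsWithin self_mem_Ici)⟩

lemma derivWithin_lvFun_Iic_le [Nonempty (Fin p)] (hf : Feasible N f) (hθ1 : 0 ≤ θ1)
    (haff : ∀ i, IsAffineOn (ℓw i) (Ico θ1 θhat))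
    (htot : ∃ b : ℝ, ∀ ζ ∈ Ico θ1 θhat, ∑ i : Fin p, f.fplus (ed i) ζ = b)
    (hpc : ∀ i, IsStepFunctionOn (f.fplus (ed i)) θ1 θhat)
    (hmin : ∀ i, ∀ ζ ∈ Ico θ1 θhat, 0 < f.fplus (ed i) ζ →
      hFun N f ed ℓw i ζ = lvFun N f ed ℓw ζ)
    (hθ : θ ∈ Ioo θ1 θhat)
    (hbefore : ∀ i : Fin p, hFun N f ed ℓw i θ = lvFun N f ed ℓw θ →
      derivWithin (hFun N f ed ℓw i) (Ici θ) θ = derivWithin (lvFun N f ed ℓw) (Ici θ) θ →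
      ∃ ε > 0, ∀ ζ ∈ Ioo (θ - ε) θ, hFun N f ed ℓw i ζ = lvFun N f ed ℓw ζ) :
    derivWithin (lvFun N f ed ℓw) (Iic θ) θ ≤ derivWithin (lvFun N f ed ℓw) (Ici θ) θ := by
  obtain ⟨j, ⟨hjθ, hjR⟩, hle⟩ :=
    exists_activeAfter_derivWithin_le hf hθ1 haff htot hpc hmin hθ
  obtain ⟨ε, hε, hεeq⟩ := hbefore j hjθ hjR
  have hj : lvFun N f ed ℓw =ᶠ[𝓝[≤] θ] hFun N f ed ℓw j := by
    filter_upwards [Ioc_mem_nhdsLE (sub_lt_self θ hε)] with ζ hζ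
    rcases hζ.2.lt_or_eq with h | rfl
    exacts [(hεeq ζ ⟨hζ.1, h⟩).symm, hjθ.symm]
  rwa [hj.derivWithin_eq hjθ.symm]

end Labels

theorem label_derivative_claims_general
    {V E : Type} [Fintype V] [DecidableEq V] [Fintype E] [DecidableEq E]
    (N : Network V E) (f : FlowOverTime N) (hf : Feasible N f)
    (p : ℕ) (hp : 1 ≤ p) (ed : Fin p → E) (ℓw : Fin p → ℝ → ℝ)
    (θ1 θhat : ℝ) (hθ1 : 0 ≤ θ1)
    (haff : ∀ i, ∃ m c : ℝ, ∀ ζ ∈ Set.Ico θ1 θhat, ℓw i ζ = m * ζ + c)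
    (htot : ∃ b : ℝ, ∀ ζ ∈ Set.Ico θ1 θhat, ∑ i : Fin p, f.fplus (ed i) ζ = b)
    (hpc : ∀ i, ∃ (n : ℕ) (t : ℕ → ℝ),
      t 0 = θ1 ∧ t n = θhat ∧ (∀ j, j < n → t j < t (j+1)) ∧
      ∀ j, j < n → ∀ ζ ∈ Set.Ico (t j) (t (j+1)), f.fplus (ed i) ζ = f.fplus (ed i) (t j))
    (hmin : ∀ i, ∀ ζ ∈ Set.Ico θ1 θhat, 0 < f.fplus (ed i) ζ →
      hFun N f ed ℓw i ζ = lvFun N f ed ℓw ζ) :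
    -- continuity on [θ1, θ̂)
    (∀ i, ContinuousOn (hFun N f ed ℓw i) (Set.Ico θ1 θhat)) ∧
    ContinuousOn (lvFun N f ed ℓw) (Set.Ico θ1 θhat) ∧
    -- piecewise linearity on [θ1, θ̂)
    (∀ i, ∃ (n : ℕ) (t : ℕ → ℝ),
      t 0 = θ1 ∧ t n = θhat ∧ (∀ j, j < n → t j < t (j+1)) ∧
      ∀ j, j < n → ∃ m c : ℝ, ∀ ζ ∈ Set.Ico (t j) (t (j+1)),
        hFun N f ed ℓw i ζ = m * ζ + c) ∧
    (∃ (n : ℕ) (t : ℕ → ℝ),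
      t 0 = θ1 ∧ t n = θhat ∧ (∀ j, j < n → t j < t (j+1)) ∧
      ∀ j, j < n → ∃ m c : ℝ, ∀ ζ ∈ Set.Ico (t j) (t (j+1)),
        lvFun N f ed ℓw ζ = m * ζ + c) ∧
    -- one-sided derivatives exist everywhere in (θ1, θ̂)
    (∀ θ ∈ Set.Ioo θ1 θhat,
      (∀ i, DifferentiableWithinAt ℝ (hFun N f ed ℓw i) (Set.Iic θ) θ ∧
            DifferentiableWithinAt ℝ (hFun N f ed ℓw i) (Set.Ici θ) θ) ∧
      DifferentiableWithinAt ℝ (lvFun N f ed ℓw) (Set.Iic θ) θ ∧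
      DifferentiableWithinAt ℝ (lvFun N f ed ℓw) (Set.Ici θ) θ) ∧
    -- claim (1)
    (∀ θ ∈ Set.Ioo θ1 θhat, ∃ i : Fin p,
      hFun N f ed ℓw i θ = lvFun N f ed ℓw θ ∧
      derivWithin (hFun N f ed ℓw i) (Set.Iic θ) θ
        ≤ derivWithin (lvFun N f ed ℓw) (Set.Ici θ) θ) ∧
    -- claim (2)
    (∀ θ ∈ Set.Ioo θ1 θhat,
      (∀ i : Fin p, hFun N f ed ℓw i θ = lvFun N f ed ℓw θ →
        derivWithin (hFun N f ed ℓw i) (Set.Ici θ) θ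
          = derivWithin (lvFun N f ed ℓw) (Set.Ici θ) θ →
        ∃ ε > 0, ∀ ζ ∈ Set.Ioo (θ - ε) θ, hFun N f ed ℓw i ζ = lvFun N f ed ℓw ζ) →
      derivWithin (lvFun N f ed ℓw) (Set.Iic θ) θ
        ≤ derivWithin (lvFun N f ed ℓw) (Set.Ici θ) θ) := by
  have : Nonempty (Fin p) := ⟨⟨0, hp⟩⟩
  have hpw : ∀ i, PiecewiseAffineOn (hFun N f ed ℓw i) θ1 θhat :=
    fun i => hFun_piecewiseAffineOn hf hθ1 (haff i) (hpc i)
  refine ⟨fun i => hFun_continuousOn (haff i),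
    continuousOn_iInf fun i => hFun_continuousOn (haff i),
    fun i => (hpw i).exists_partition, (PiecewiseAffineOn.iInf hpw).exists_partition,
    fun θ hθ => differentiableWithinAt_hFun_lvFun hf hθ1 haff hpc hθ, fun θ hθ => ?_,
    fun θ hθ => derivWithin_lvFun_Iic_le hf hθ1 haff htot hpc hmin hθ⟩
  obtain ⟨j, ⟨hjθ, -⟩, hle⟩ := exists_activeAfter_derivWithin_le hf hθ1 haff htot hpc hmin hθ
  exact ⟨j, hjθ, hle⟩

/-- Let `v` be a node with outgoing edges `vw_1, …, vw_p` and `f` a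
feasible flow such that on `[θ1, θ̂)` the total outflow from `v` is constant, each
`f⁺_{vw_i}` is right-constant and piecewise constant with finitely many pieces, each
`ℓ_{w_i}` is affine, and flow only enters edges minimizing `h_i`. Then the `h_i` and
`ℓ_v = min_i h_i` are continuous and piecewise linear on `[θ1, θ̂)` and possess one-sided
derivatives everywhere in `(θ1, θ̂)`; moreover, for every `θ ∈ (θ1, θ̂)`:
(1) `min{∂⁻h_i(θ) : i ∈ I(θ)} ≤ ∂⁺ℓ_v(θ)`; and (2) if every edge active immediately
after `θ` was also active immediately before `θ`, then `∂⁻ℓ_v(θ) ≤ ∂⁺ℓ_v(θ)`. -/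
theorem label_derivative_claims
    {V E : Type} [Fintype V] [DecidableEq V] [Fintype E] [DecidableEq E]
    (N : Network V E) (hbdd : N.BddInflow)
    (f : FlowOverTime N) (hf : Feasible N f)
    (v : V) (p : ℕ) (hp : 1 ≤ p)
    (ed : Fin p → E) (hed_tail : ∀ i, N.tail (ed i) = v)
    (hed_inj : Function.Injective ed) (hed_all : ∀ e, N.tail e = v → ∃ i, ed i = e)
    (ℓw : Fin p → ℝ → ℝ)
    (θ1 θhat : ℝ) (hθ1 : 0 ≤ θ1) (hlt : θ1 < θhat)
    (haff : ∀ i, ∃ m c : ℝ, ∀ ζ ∈ Set.Ico θ1 θhat, ℓw i ζ = m * ζ + c)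
    (htot : ∃ b : ℝ, ∀ ζ ∈ Set.Ico θ1 θhat, ∑ i : Fin p, f.fplus (ed i) ζ = b)
    (hpc : ∀ i, ∃ (n : ℕ) (t : ℕ → ℝ),
      t 0 = θ1 ∧ t n = θhat ∧ (∀ j, j < n → t j < t (j+1)) ∧
      ∀ j, j < n → ∀ ζ ∈ Set.Ico (t j) (t (j+1)), f.fplus (ed i) ζ = f.fplus (ed i) (t j))
    (hmin : ∀ i, ∀ ζ ∈ Set.Ico θ1 θhat, 0 < f.fplus (ed i) ζ →
      hFun N f ed ℓw i ζ = lvFun N f ed ℓw ζ) :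
    -- continuity on [θ1, θ̂)
    (∀ i, ContinuousOn (hFun N f ed ℓw i) (Set.Ico θ1 θhat)) ∧
    ContinuousOn (lvFun N f ed ℓw) (Set.Ico θ1 θhat) ∧
    -- piecewise linearity on [θ1, θ̂)
    (∀ i, ∃ (n : ℕ) (t : ℕ → ℝ),
      t 0 = θ1 ∧ t n = θhat ∧ (∀ j, j < n → t j < t (j+1)) ∧
      ∀ j, j < n → ∃ m c : ℝ, ∀ ζ ∈ Set.Ico (t j) (t (j+1)),
        hFun N f ed ℓw i ζ = m * ζ + c) ∧
    (∃ (n : ℕ) (t : ℕ → ℝ),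
      t 0 = θ1 ∧ t n = θhat ∧ (∀ j, j < n → t j < t (j+1)) ∧
      ∀ j, j < n → ∃ m c : ℝ, ∀ ζ ∈ Set.Ico (t j) (t (j+1)),
        lvFun N f ed ℓw ζ = m * ζ + c) ∧
    -- one-sided derivatives exist everywhere in (θ1, θ̂)
    (∀ θ ∈ Set.Ioo θ1 θhat,
      (∀ i, DifferentiableWithinAt ℝ (hFun N f ed ℓw i) (Set.Iic θ) θ ∧
            DifferentiableWithinAt ℝ (hFun N f ed ℓw i) (Set.Ici θ) θ) ∧
      DifferentiableWithinAt ℝ (lvFun N f ed ℓw) (Set.Iic θ) θ ∧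
      DifferentiableWithinAt ℝ (lvFun N f ed ℓw) (Set.Ici θ) θ) ∧
    -- claim (1)
    (∀ θ ∈ Set.Ioo θ1 θhat, ∃ i : Fin p,
      hFun N f ed ℓw i θ = lvFun N f ed ℓw θ ∧
      derivWithin (hFun N f ed ℓw i) (Set.Iic θ) θ
        ≤ derivWithin (lvFun N f ed ℓw) (Set.Ici θ) θ) ∧
    -- claim (2)
    (∀ θ ∈ Set.Ioo θ1 θhat,
      (∀ i : Fin p, hFun N f ed ℓw i θ = lvFun N f ed ℓw θ →
        derivWithin (hFun N f ed ℓw i) (Set.Ici θ) θ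
          = derivWithin (lvFun N f ed ℓw) (Set.Ici θ) θ →
        ∃ ε > 0, ∀ ζ ∈ Set.Ioo (θ - ε) θ, hFun N f ed ℓw i ζ = lvFun N f ed ℓw ζ) →
      derivWithin (lvFun N f ed ℓw) (Set.Iic θ) θ
        ≤ derivWithin (lvFun N f ed ℓw) (Set.Ici θ) θ) :=
  label_derivative_claims_general N f hf p hp ed ℓw θ1 θhat hθ1 haff htot hpc hmin
end

section
/- Let N₀ be the five-node network described below and let U ∈ ℕ with U ≥ 1. Equip N₀ with the network inflow rate u_s = 2·1_{[0,U]} at node s and zero inflow at all other nodes. Then every instantaneous dynamic equilibrium (IDE) flow in this network has at least ⌊U/4⌋ phases. Consequently, the number of phases of an IDE flow is in general not polynomially bounded in the encoding size of the instance (which is O(log U) here). -/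
open MeasureTheory Set

variable {V E : Type} [Fintype V] [DecidableEq V] [Fintype E] [DecidableEq E]

/-!
In `N₀` only the edges `vt` and `wx` can carry queues, and an IDE sends the inflow at `s` along
`s → v → t` only while that route is no longer than `s → w → x → t`, i.e. while
`q_vt ≤ 1 + q_wx`. Tracking the last time the two routes were equally long shows that the queues
stay bounded (`q_vt ≤ 3`, `q_wx ≤ 2`). Now take a time window inside `[0, U]` of length more than
`4` on which all rates are constant. If all flow goes via `v`, the queue of `vt` grows at rate `1`
while `wx` empties, and the route via `v` stops being shortest; symmetrically if all flow goes
via `w`. If the flow is split, both routes are equally long throughout, which forces both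
outgoing rates at `s` to be `1` one time unit earlier, hence balance on a window one unit earlier;
iterating reaches time `1`, where the route via `v` is strictly shorter. So every phase meets
`[0, U]` in an interval of length at most `4`.
-/

open Filter Topology

lemma exists_last_of_isClosed {P : ℝ → Prop} (hP : IsClosed {x | P x}) {c d : ℝ}
    (hne : ∃ y ∈ Icc c d, P y) : ∃ x ∈ Icc c d, P x ∧ ∀ y ∈ Ioc x d, ¬ P y := by
  have hS : IsCompact (Icc c d ∩ {x | P x}) := isCompact_Icc.inter_right hP
  obtain ⟨hx, hPx⟩ := hS.sSup_mem (by obtain ⟨y, hy, hPy⟩ := hne; exact ⟨y, hy, hPy⟩)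
  refine ⟨_, hx, hPx, fun y hy hPy => hy.1.not_ge ?_⟩
  exact le_csSup hS.bddAbove ⟨⟨hx.1.trans hy.1.le, hy.2⟩, hPy⟩

lemma Continuous.exists_last_zero {g : ℝ → ℝ} (hg : Continuous g) {c d : ℝ} (hcd : c ≤ d)
    (hc : g c ≤ 0) (hd : 0 < g d) : ∃ x ∈ Ico c d, g x = 0 ∧ ∀ y ∈ Ioc x d, 0 < g y := by
  obtain ⟨x, hx, hgx, hlast⟩ :=
    exists_last_of_isClosed (isClosed_le hg continuous_const) ⟨c, left_mem_Icc.2 hcd, hc⟩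
  have hpos : ∀ y ∈ Ioc x d, 0 < g y := fun y hy => not_le.1 (hlast y hy)
  have hxd : x < d := lt_of_le_of_ne hx.2 (by rintro rfl; exact hgx.not_gt hd)
  have hclosure : x ∈ closure (Ioc x d) := by rw [closure_Ioc hxd.ne]; exact left_mem_Icc.2 hxd.le
  have : 0 ≤ g x := (isClosed_le continuous_const hg).closure_subset_iff.2
    (fun y hy => (hpos y hy).le) hclosure
  exact ⟨x, ⟨hx.1, hxd⟩, le_antisymm hgx this, hpos⟩

lemma exists_mem_Ioo_of_ae_restrict {a b : ℝ} (hab : a < b) {P : ℝ → Prop}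
    (h : ∀ᵐ x ∂volume.restrict (Ioo a b), P x) : ∃ x ∈ Ioo a b, P x := by
  have : (ae (volume.restrict (Ioo a b))).NeBot := ae_restrict_neBot.2 (by simp [hab])
  obtain ⟨x, hPx, hx⟩ := (h.and (ae_restrict_mem measurableSet_Ioo)).exists
  exact ⟨x, hx, hPx⟩

lemma Continuous.le_of_ae_restrict_Ioo {g h : ℝ → ℝ} (hg : Continuous g) (hh : Continuous h)
    {a b : ℝ} (hab : a < b) (hle : ∀ᵐ x ∂volume.restrict (Ioo a b), g x ≤ h x) :
    ∀ x ∈ Icc a b, g x ≤ h x := by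
  have hIoo : ∀ x ∈ Ioo a b, g x ≤ h x := by
    intro x hx
    by_contra hlt
    have hpos := (isOpen_Ioo.inter (isOpen_lt hh hg)).measure_pos volume ⟨x, hx, not_le.1 hlt⟩
    rw [ae_restrict_iff' measurableSet_Ioo] at hle
    refine hpos.ne' (measure_mono_null (fun y hy => ?_) (ae_iff.1 hle))
    exact fun hyle => (hyle hy.1).not_gt hy.2
  intro x hx
  rw [← closure_Ioo hab.ne] at hx
  exact (isClosed_le hg hh).closure_subset_iff.2 hIoo hx

lemma ae_restrict_Ioo_comp_add {P : ℝ → Prop} {a b : ℝ} (c : ℝ)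
    (h : ∀ᵐ x ∂volume.restrict (Ioo a b), P x) :
    ∀ᵐ x ∂volume.restrict (Ioo (a - c) (b - c)), P (x + c) := by
  rw [ae_restrict_iff' measurableSet_Ioo] at h ⊢
  rw [ae_iff] at h ⊢
  refine measure_mono_null (fun x hx => ?_) ((measure_preimage_add_right volume c _).trans h)
  simp only [mem_ofPred_eq, mem_preimage, mem_Ioo] at hx ⊢
  exact fun hxI => hx fun h' => hxI ⟨by linarith [h'.1], by linarith [h'.2]⟩

lemma ae_eq_zero_of_forall_intervalIntegral_eq_zero {g : ℝ → ℝ} {r m : ℝ}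
    (hg : IntervalIntegrable g volume r m) (h : ∀ x ∈ Icc r m, ∫ t in r..x, g t = 0) :
    ∀ᵐ x ∂volume.restrict (Ioo r m), g x = 0 := by
  rcases le_or_gt r m with hrm | hrm
  · rw [ae_restrict_iff' measurableSet_Ioo]
    filter_upwards [hg.ae_hasDerivAt_integral] with x hx hxm
    have hx' := hx (by rw [uIcc_of_le hrm]; exact Ioo_subset_Icc_self hxm) r
      (by rw [uIcc_of_le hrm]; exact left_mem_Icc.2 hrm)
    have hzero : (fun y => ∫ t in r..y, g t) =ᶠ[𝓝 x] fun _ => 0 :=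
      eventually_of_mem (Ioo_mem_nhds hxm.1 hxm.2) fun y hy => h y (Ioo_subset_Icc_self hy)
    exact hx'.unique ((hasDerivAt_const x (0 : ℝ)).congr_of_eventuallyEq hzero)
  · simp [Ioo_eq_empty_of_le hrm.le]

namespace FlowOverTime

variable {N : Network V E} (f : FlowOverTime N)

noncomputable def queue (e : E) (θ : ℝ) : ℝ := queueOf N f.fplus f.fminus e θ

def netRate (e : E) (θ : ℝ) : ℝ := f.fplus e θ - f.fminus e (θ + N.time e)

lemma intervalIntegrable_fplus_s12 (e : E) (a b : ℝ) : IntervalIntegrable (f.fplus e) volume a b :=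
  (f.fplus_int e a).symm.trans (f.fplus_int e b)

lemma intervalIntegrable_fminus_s12 (e : E) (a b : ℝ) :
    IntervalIntegrable (f.fminus e) volume a b :=
  (f.fminus_int e a).symm.trans (f.fminus_int e b)

lemma intervalIntegrable_fminus_add_time_s12 (e : E) (a b : ℝ) :
    IntervalIntegrable (fun ζ => f.fminus e (ζ + N.time e)) volume a b := by
  simpa using (f.intervalIntegrable_fminus_s12 e (a + N.time e) (b + N.time e)).comp_add_right
    (N.time e)

lemma intervalIntegrable_netRate (e : E) (a b : ℝ) :
    IntervalIntegrable (f.netRate e) volume a b :=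
  (f.intervalIntegrable_fplus_s12 e a b).sub (f.intervalIntegrable_fminus_add_time_s12 e a b)

lemma queue_sub_queue (e : E) (s t : ℝ) :
    f.queue e t - f.queue e s = ∫ ζ in s..t, f.netRate e ζ := by
  have hplus := intervalIntegral.integral_add_adjacent_intervals
    (f.intervalIntegrable_fplus_s12 e 0 s) (f.intervalIntegrable_fplus_s12 e s t)
  have hminus := intervalIntegral.integral_add_adjacent_intervals
    (f.intervalIntegrable_fminus_s12 e 0 (s + N.time e))
    (f.intervalIntegrable_fminus_s12 e (s + N.time e) (t + N.time e))
  have hshift := intervalIntegral.integral_comp_add_right (f.fminus e) (N.time e) (a := s) (b := t)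
  have hsub := intervalIntegral.integral_sub (f.intervalIntegrable_fplus_s12 e s t)
    (f.intervalIntegrable_fminus_add_time_s12 e s t)
  simp only [netRate, queue, queueOf] at hsub ⊢
  linarith

lemma continuous_queue (e : E) : Continuous (f.queue e) :=
  (intervalIntegral.continuous_primitive (f.intervalIntegrable_fplus_s12 e) 0).sub
    ((intervalIntegral.continuous_primitive (f.intervalIntegrable_fminus_s12 e) 0).comp
      (continuous_add_const (N.time e)))

lemma queue_sub_le {e : E} {s t C : ℝ} (hst : s ≤ t)
    (h : ∀ᵐ ζ ∂volume.restrict (Ioo s t), f.netRate e ζ ≤ C) :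
    f.queue e t - f.queue e s ≤ C * (t - s) := by
  rw [f.queue_sub_queue, ← mul_comm, ← smul_eq_mul, ← intervalIntegral.integral_const]
  refine intervalIntegral.integral_mono_ae_restrict hst (f.intervalIntegrable_netRate e s t)
    intervalIntegrable_const ?_
  rwa [EventuallyLE, ← Measure.restrict_congr_set Ioo_ae_eq_Icc]

lemma le_queue_sub {e : E} {s t C : ℝ} (hst : s ≤ t)
    (h : ∀ᵐ ζ ∂volume.restrict (Ioo s t), C ≤ f.netRate e ζ) :
    C * (t - s) ≤ f.queue e t - f.queue e s := by
  rw [f.queue_sub_queue, ← mul_comm, ← smul_eq_mul, ← intervalIntegral.integral_const]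
  refine intervalIntegral.integral_mono_ae_restrict hst intervalIntegrable_const
    (f.intervalIntegrable_netRate e s t) ?_
  rwa [EventuallyLE, ← Measure.restrict_congr_set Ioo_ae_eq_Icc]

lemma queue_le_of_fplus_eq_zero {e : E} {s t : ℝ} (hst : s ≤ t)
    (h : ∀ᵐ ζ ∂volume.restrict (Ioo s t), f.fplus e ζ = 0) : f.queue e t ≤ f.queue e s := by
  have := f.queue_sub_le hst (C := 0) (h.mono fun ζ hζ => by
    rw [netRate, hζ]
    linarith [f.fminus_nonneg e (ζ + N.time e)])
  linarith

end FlowOverTime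

namespace Feasible

variable {N : Network V E} {f : FlowOverTime N} (hf : Feasible N f)
include hf

lemma fminus_add_time_of_queue_pos {e : E} {θ : ℝ} (hθ : 0 ≤ θ) (hq : 0 < f.queue e θ) :
    f.fminus e (θ + N.time e) = N.cap e := by
  rw [hf.2.2.2 e θ hθ]
  exact if_pos hq

lemma fminus_add_time_of_queue_nonpos {e : E} {θ : ℝ} (hθ : 0 ≤ θ) (hq : f.queue e θ ≤ 0) :
    f.fminus e (θ + N.time e) = min (f.fplus e θ) (N.cap e) := by
  rw [hf.2.2.2 e θ hθ]
  exact if_neg hq.not_gt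

lemma fminus_le_cap (e : E) {θ : ℝ} (hθ : 0 ≤ θ) : f.fminus e θ ≤ N.cap e := by
  rcases lt_or_ge θ (N.time e) with hlt | hge
  · rw [hf.2.2.1 e θ hθ hlt]
    exact (N.cap_pos e).le
  · have h := hf.2.2.2 e (θ - N.time e) (by linarith)
    rw [sub_add_cancel] at h
    rw [h]
    split_ifs
    exacts [le_rfl, min_le_right _ _]

lemma queue_zero (e : E) : f.queue e 0 = 0 := by
  have hτ := N.time_pos e
  have hle : ∫ ζ in (0:ℝ)..N.time e, f.fminus e ζ ≤ ∫ ζ in (0:ℝ)..N.time e, (0:ℝ) :=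
    intervalIntegral.integral_mono_on_of_le_Ioo hτ.le (f.intervalIntegrable_fminus_s12 e _ _)
      intervalIntegrable_const fun ζ hζ => (hf.2.2.1 e ζ hζ.1.le hζ.2).le
  have hge := intervalIntegral.integral_nonneg (μ := volume) hτ.le fun ζ _ => f.fminus_nonneg e ζ
  simp only [FlowOverTime.queue, queueOf, intervalIntegral.integral_same, zero_add,
    intervalIntegral.integral_zero] at hle ⊢
  linarith

lemma queue_nonneg (e : E) {θ : ℝ} (hθ : 0 ≤ θ) : 0 ≤ f.queue e θ := by
  by_contra hneg
  obtain ⟨x, hx, hqx, hlast⟩ := (continuous_neg.comp (f.continuous_queue e)).exists_last_zero hθ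
    (by simp [hf.queue_zero]) (by simpa using hneg)
  have : 0 * (θ - x) ≤ f.queue e θ - f.queue e x := by
    refine f.le_queue_sub hx.2.le (ae_restrict_of_forall_mem measurableSet_Ioo fun ζ hζ => ?_)
    have hqζ : f.queue e ζ ≤ 0 := by simpa using (hlast ζ ⟨hζ.1, hζ.2.le⟩).le
    rw [FlowOverTime.netRate, hf.fminus_add_time_of_queue_nonpos (hx.1.trans hζ.1.le) hqζ]
    linarith [min_le_left (f.fplus e ζ) (N.cap e)]
  simp only [Function.comp_apply, neg_eq_zero] at hqx
  linarith

lemma queue_eq_zero_of_fplus_le_cap {e : E} (hcap : ∀ ζ, 0 ≤ ζ → f.fplus e ζ ≤ N.cap e)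
    {θ : ℝ} (hθ : 0 ≤ θ) : f.queue e θ = 0 := by
  refine le_antisymm (not_lt.1 fun hpos => ?_) (hf.queue_nonneg e hθ)
  obtain ⟨x, hx, hqx, hlast⟩ := (f.continuous_queue e).exists_last_zero hθ
    (hf.queue_zero e).le hpos
  have : f.queue e θ - f.queue e x ≤ 0 * (θ - x) := by
    refine f.queue_sub_le hx.2.le (ae_restrict_of_forall_mem measurableSet_Ioo fun ζ hζ => ?_)
    have hζ0 : 0 ≤ ζ := hx.1.trans hζ.1.le
    rw [FlowOverTime.netRate,
      hf.fminus_add_time_of_queue_pos hζ0 (hlast ζ ⟨hζ.1, hζ.2.le⟩)]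
    linarith [hcap ζ hζ0]
  linarith

lemma netRate_le {e : E} {θ M : ℝ} (hθ : 0 ≤ θ) (hM : f.fplus e θ ≤ M) (hcap : N.cap e ≤ M) :
    f.netRate e θ ≤ M - N.cap e := by
  rw [FlowOverTime.netRate, hf.2.2.2 e θ hθ]
  split_ifs
  · linarith
  · rcases min_cases (f.fplus e θ) (N.cap e) with ⟨h, -⟩ | ⟨h, -⟩ <;> rw [h] <;> linarith

lemma queue_le_add_of_fplus_eq_zero {e : E} {x y δ M : ℝ} (hx : 0 ≤ x) (hxy : x ≤ y)
    (hδ : 0 ≤ δ) (hcap : N.cap e ≤ M) (hM : ∀ ζ, x ≤ ζ → f.fplus e ζ ≤ M)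
    (hzero : ∀ ζ ∈ Ioo (x + δ) y, f.fplus e ζ = 0) :
    f.queue e y ≤ f.queue e x + (M - N.cap e) * δ := by
  have hslope : ∀ z, x ≤ z → f.queue e z - f.queue e x ≤ (M - N.cap e) * (z - x) :=
    fun z hxz => f.queue_sub_le hxz (ae_restrict_of_forall_mem measurableSet_Ioo fun ζ hζ =>
      hf.netRate_le (hx.trans hζ.1.le) (hM ζ hζ.1.le) hcap)
  rcases le_or_gt y (x + δ) with hy | hy
  · nlinarith [hslope y hxy]
  · have hdrop := f.queue_le_of_fplus_eq_zero hy.le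
      (ae_restrict_of_forall_mem measurableSet_Ioo hzero)
    nlinarith [hslope (x + δ) (by linarith)]

lemma queue_le_max_of_fplus_eq_zero {e : E} {s t : ℝ} (hs : 0 ≤ s) (hst : s ≤ t)
    (hzero : ∀ᵐ ζ ∂volume.restrict (Ioo s t), f.fplus e ζ = 0) :
    f.queue e t ≤ max 0 (f.queue e s - N.cap e * (t - s)) := by
  have hmono : ∀ y ∈ Icc s t, f.queue e t ≤ f.queue e y := fun y hy =>
    f.queue_le_of_fplus_eq_zero hy.2
      (ae_restrict_of_ae_restrict_of_subset (Ioo_subset_Ioo_left hy.1) hzero)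
  rcases le_or_gt (f.queue e t) 0 with ht | ht
  · exact ht.trans (le_max_left _ _)
  · refine le_max_of_le_right ?_
    have := f.queue_sub_le (e := e) hst (C := - N.cap e) (by
      filter_upwards [hzero, ae_restrict_mem measurableSet_Ioo] with ζ hζ hζI
      rw [FlowOverTime.netRate, hζ, hf.fminus_add_time_of_queue_pos (hs.trans hζI.1.le)
        (ht.trans_le (hmono ζ (Ioo_subset_Icc_self hζI)))]
      simp)
    linarith

lemma le_queue_sub_of_le_fplus {e : E} {s t M : ℝ} (hs : 0 ≤ s) (hst : s ≤ t)
    (hM : ∀ᵐ ζ ∂volume.restrict (Ioo s t), M ≤ f.fplus e ζ) :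
    (M - N.cap e) * (t - s) ≤ f.queue e t - f.queue e s := by
  refine f.le_queue_sub hst ?_
  filter_upwards [hM, ae_restrict_mem measurableSet_Ioo] with ζ hζ hζI
  have := hf.fminus_le_cap e (by linarith [hζI.1, N.time_pos e] : 0 ≤ ζ + N.time e)
  rw [FlowOverTime.netRate]
  linarith

end Feasible

lemma AEConstOn.mono {g : ℝ → ℝ} {S T : Set ℝ} (h : AEConstOn g T) (hST : S ⊆ T) :
    AEConstOn g S :=
  let ⟨c, hc⟩ := h
  ⟨c, ae_restrict_of_ae_restrict_of_subset hST hc⟩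

def RatesAEConstOn {N : Network V E} (f : FlowOverTime N) (S : Set ℝ) : Prop :=
  ∀ e, AEConstOn (f.fplus e) S ∧ AEConstOn (f.fminus e) S

lemma RatesAEConstOn.mono {N : Network V E} {f : FlowOverTime N} {S T : Set ℝ}
    (h : RatesAEConstOn f T) (hST : S ⊆ T) : RatesAEConstOn f S :=
  fun e => ⟨(h e).1.mono hST, (h e).2.mono hST⟩

lemma PhasePartition.le_mul_of_window_le {N : Network V E} {f : FlowOverTime N} {n : ℕ}
    {t : ℕ → ℝ} (ht : PhasePartition N f n t) {U L : ℝ}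
    (hwin : ∀ a b, 0 ≤ a → b ≤ U → RatesAEConstOn f (Ioo a b) → b - a ≤ L)
    (hL : 0 ≤ L) : U ≤ (n + 1) * L := by
  obtain ⟨ht0, hmono, hconst⟩ := ht
  have hnonneg : ∀ i ≤ n, 0 ≤ t i := by
    intro i hi
    induction i with
    | zero => exact ht0.ge
    | succ i ih => exact (ih (by omega)).trans (hmono i (by omega)).le
  have hstep : ∀ i ≤ n, ∀ T, Ioo (t i) T ⊆ phaseSeg n t i → t i ≤ U → min T U ≤ t i + L := by
    intro i hi T hT htU
    have hsub : Ioo (t i) (min T U) ⊆ phaseSeg n t i :=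
      (Ioo_subset_Ioo_right (min_le_left _ _)).trans hT
    have := hwin (t i) (min T U) (hnonneg i hi) (min_le_right _ _)
      (RatesAEConstOn.mono (hconst i hi) hsub)
    linarith
  have hclaim : ∀ i ≤ n, min (t i) U ≤ i * L := by
    intro i hi
    induction i with
    | zero => simp [ht0]
    | succ i ih =>
      have ih := ih (by omega)
      have hseg : Ioo (t i) (t (i + 1)) ⊆ phaseSeg n t i := by
        rw [phaseSeg, if_pos (by omega)]
      push_cast
      rcases le_or_gt (t i) U with htU | htU
      · have := hstep i (by omega) _ hseg htU
        rw [min_eq_left htU] at ih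
        linarith
      · rw [min_eq_right htU.le] at ih
        linarith [min_le_right (t (i + 1)) U]
  have hlast : Ioo (t n) U ⊆ phaseSeg n t n := by
    rw [phaseSeg, if_neg (lt_irrefl n)]
    exact Ioo_subset_Ioi_self
  have hn := hclaim n le_rfl
  rcases le_or_gt (t n) U with htU | htU
  · have := hstep n le_rfl U hlast htU
    rw [min_self] at this
    rw [min_eq_left htU] at hn
    linarith
  · rw [min_eq_right htU.le] at hn
    linarith

/-- The nodes `s, v, w, x, t` are `0, …, 4` and the edges `sv, sw, vt, wx, xt` are `0, …, 4`. -/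
structure IsNetworkN0 (U : ℕ) (N : Network (Fin 5) (Fin 5)) : Prop where
  tail : N.tail = ![0, 0, 1, 2, 3]
  head : N.head = ![1, 2, 4, 3, 4]
  cap : N.cap = ![2, 2, 1, 1, 1]
  time : ∀ e, N.time e = 1
  sink : N.sink = 4
  u : ∀ w θ, N.u w θ = if w = 0 ∧ 0 ≤ θ ∧ θ < (U : ℝ) then 2 else 0

namespace IsNetworkN0

def walksToSink : Fin 5 → List (List (Fin 5)) :=
  ![[[0, 2], [1, 3, 4]], [[2]], [[3, 4]], [[4]], [[]]]

/-- The length of the route `s → v → t` minus that of `s → w → x → t`, as seen at time `θ`. -/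
noncomputable def routeGap {N : Network (Fin 5) (Fin 5)} (f : FlowOverTime N) (θ : ℝ) : ℝ :=
  f.queue 2 θ - f.queue 3 θ - 1

lemma continuous_routeGap {N : Network (Fin 5) (Fin 5)} (f : FlowOverTime N) :
    Continuous (routeGap f) :=
  ((f.continuous_queue 2).sub (f.continuous_queue 3)).sub continuous_const

variable {U : ℕ} {N : Network (Fin 5) (Fin 5)} (hN : IsNetworkN0 U N) {f : FlowOverTime N}
include hN

lemma outEdges_eq : N.outEdges = ![{0, 1}, {2}, {3}, {4}, ∅] := by
  funext v
  rw [Network.outEdges, hN.tail]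
  fin_cases v <;> decide

lemma inEdges_eq : N.inEdges = ![∅, {0}, {1}, {3}, {2, 4}] := by
  funext v
  rw [Network.inEdges, hN.head]
  fin_cases v <;> decide

lemma isWalk_sink_iff (v : Fin 5) (L : List (Fin 5)) :
    IsWalk N.tail N.head v N.sink L ↔ L ∈ walksToSink v := by
  rw [hN.sink]
  induction L generalizing v with
  | nil => fin_cases v <;> simp [IsWalk, walksToSink]
  | cons e L ih =>
    simp only [IsWalk, ih]
    rw [hN.tail, hN.head]
    fin_cases v <;> fin_cases e <;> simp [walksToSink]

lemma cap_eq_one {e : Fin 5} (he : e = 2 ∨ e = 3) : N.cap e = 1 := by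
  rcases he with rfl | rfl <;> simp [hN.cap]

lemma u_zero_le_two (θ : ℝ) : N.u 0 θ ≤ 2 := by
  rw [hN.u]
  split_ifs <;> norm_num

lemma u_zero_eq_two {θ : ℝ} (h0 : 0 ≤ θ) (hU : θ < U) : N.u 0 θ = 2 := by
  rw [hN.u, if_pos ⟨rfl, h0, hU⟩]

lemma fplus_zero_add_fplus_one (hf : Feasible N f) {θ : ℝ} (hθ : 0 ≤ θ) :
    f.fplus 0 θ + f.fplus 1 θ = N.u 0 θ := by
  have h := hf.1 0 (by rw [hN.sink]; decide) θ hθ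
  simpa [hN.outEdges_eq, hN.inEdges_eq] using h

lemma fplus_two_eq_fminus_zero (hf : Feasible N f) {θ : ℝ} (hθ : 0 ≤ θ) :
    f.fplus 2 θ = f.fminus 0 θ := by
  have h := hf.1 1 (by rw [hN.sink]; decide) θ hθ
  simpa [hN.outEdges_eq, hN.inEdges_eq, hN.u, sub_eq_zero] using h

lemma fplus_three_eq_fminus_one (hf : Feasible N f) {θ : ℝ} (hθ : 0 ≤ θ) :
    f.fplus 3 θ = f.fminus 1 θ := by
  have h := hf.1 2 (by rw [hN.sink]; decide) θ hθ
  simpa [hN.outEdges_eq, hN.inEdges_eq, hN.u, sub_eq_zero] using h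

lemma fplus_four_eq_fminus_three (hf : Feasible N f) {θ : ℝ} (hθ : 0 ≤ θ) :
    f.fplus 4 θ = f.fminus 3 θ := by
  have h := hf.1 3 (by rw [hN.sink]; decide) θ hθ
  simpa [hN.outEdges_eq, hN.inEdges_eq, hN.u, sub_eq_zero] using h

lemma fplus_le_two (hf : Feasible N f) (e : Fin 5) {θ : ℝ} (hθ : 0 ≤ θ) : f.fplus e θ ≤ 2 := by
  have hs := hN.fplus_zero_add_fplus_one hf hθ
  have hu := hN.u_zero_le_two θ
  have hcap : ∀ e', f.fminus e' θ ≤ ![2, 2, 1, 1, 1] e' := fun e' =>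
    hN.cap ▸ hf.fminus_le_cap e' hθ
  fin_cases e
  · show f.fplus 0 θ ≤ 2
    linarith [f.fplus_nonneg 1 θ]
  · show f.fplus 1 θ ≤ 2
    linarith [f.fplus_nonneg 0 θ]
  · simpa [hN.fplus_two_eq_fminus_zero hf hθ] using hcap 0
  · simpa [hN.fplus_three_eq_fminus_one hf hθ] using hcap 1
  · have h3 : f.fminus 3 θ ≤ 1 := by simpa using hcap 3
    show f.fplus 4 θ ≤ 2
    linarith [hN.fplus_four_eq_fminus_three hf hθ]

lemma queue_eq_zero (hf : Feasible N f) {e : Fin 5} (he : e = 0 ∨ e = 1 ∨ e = 4) {θ : ℝ}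
    (hθ : 0 ≤ θ) : f.queue e θ = 0 := by
  refine hf.queue_eq_zero_of_fplus_le_cap (fun ζ hζ => ?_) hθ
  rcases he with rfl | rfl | rfl
  · simpa [hN.cap] using hN.fplus_le_two hf 0 hζ
  · simpa [hN.cap] using hN.fplus_le_two hf 1 hζ
  · simpa [hN.cap, hN.fplus_four_eq_fminus_three hf hζ] using hf.fminus_le_cap 3 hζ

lemma fplus_two_add_one (hf : Feasible N f) {θ : ℝ} (hθ : 0 ≤ θ) :
    f.fplus 2 (θ + 1) = f.fplus 0 θ := by
  have h := hf.fminus_add_time_of_queue_nonpos hθ (hN.queue_eq_zero hf (Or.inl rfl) hθ).le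
  rw [hN.time, hN.cap] at h
  rw [hN.fplus_two_eq_fminus_zero hf (by linarith), h]
  exact min_eq_left (hN.fplus_le_two hf 0 hθ)

lemma fplus_three_add_one (hf : Feasible N f) {θ : ℝ} (hθ : 0 ≤ θ) :
    f.fplus 3 (θ + 1) = f.fplus 1 θ := by
  have h := hf.fminus_add_time_of_queue_nonpos hθ
    (hN.queue_eq_zero hf (Or.inr (Or.inl rfl)) hθ).le
  rw [hN.time, hN.cap] at h
  rw [hN.fplus_three_eq_fminus_one hf (by linarith), h]
  exact min_eq_left (hN.fplus_le_two hf 1 hθ)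

lemma fplus_two_eq_zero_of_lt_one (hf : Feasible N f) {θ : ℝ} (hθ : 0 ≤ θ) (h1 : θ < 1) :
    f.fplus 2 θ = 0 := by
  rw [hN.fplus_two_eq_fminus_zero hf hθ, hf.2.2.1 0 θ hθ (by rwa [hN.time])]

lemma fplus_three_eq_zero_of_lt_one (hf : Feasible N f) {θ : ℝ} (hθ : 0 ≤ θ) (h1 : θ < 1) :
    f.fplus 3 θ = 0 := by
  rw [hN.fplus_three_eq_fminus_one hf hθ, hf.2.2.1 1 θ hθ (by rwa [hN.time])]

lemma fplus_two_add_fplus_three (hf : Feasible N f) {θ : ℝ} (h1 : 1 ≤ θ) :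
    f.fplus 2 θ + f.fplus 3 θ = N.u 0 (θ - 1) := by
  have h0 : 0 ≤ θ - 1 := by linarith
  rw [← hN.fplus_zero_add_fplus_one hf h0, ← hN.fplus_two_add_one hf h0,
    ← hN.fplus_three_add_one hf h0, sub_add_cancel]

lemma fplus_two_add_fplus_three_le (hf : Feasible N f) {θ : ℝ} (hθ : 0 ≤ θ) :
    f.fplus 2 θ + f.fplus 3 θ ≤ 2 := by
  rcases lt_or_ge θ 1 with h1 | h1
  · simp [hN.fplus_two_eq_zero_of_lt_one hf hθ h1, hN.fplus_three_eq_zero_of_lt_one hf hθ h1]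
  · exact (hN.fplus_two_add_fplus_three hf h1).trans_le (hN.u_zero_le_two _)

lemma queue_eq_zero_of_le_one (hf : Feasible N f) {e : Fin 5} (he : e = 2 ∨ e = 3) {θ : ℝ}
    (hθ : 0 ≤ θ) (h1 : θ ≤ 1) : f.queue e θ = 0 := by
  refine le_antisymm ?_ (hf.queue_nonneg e hθ)
  have hzero : ∀ ζ ∈ Ioo 0 θ, f.fplus e ζ = 0 := fun ζ hζ => by
    rcases he with rfl | rfl
    · exact hN.fplus_two_eq_zero_of_lt_one hf hζ.1.le (by linarith [hζ.2])
    · exact hN.fplus_three_eq_zero_of_lt_one hf hζ.1.le (by linarith [hζ.2])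
  simpa [hf.queue_zero] using
    f.queue_le_of_fplus_eq_zero hθ (ae_restrict_of_forall_mem measurableSet_Ioo hzero)

lemma routeGap_of_le_one (hf : Feasible N f) {θ : ℝ} (hθ : 0 ≤ θ) (h1 : θ ≤ 1) :
    routeGap f θ = -1 := by
  simp [routeGap, hN.queue_eq_zero_of_le_one hf (Or.inl rfl) hθ h1,
    hN.queue_eq_zero_of_le_one hf (Or.inr rfl) hθ h1]

lemma ctimeOf_eq (hf : Feasible N f) {θ : ℝ} (hθ : 0 ≤ θ) :
    (ctimeOf N f.fplus f.fminus · θ) = ![1, 1, 1 + f.queue 2 θ, 1 + f.queue 3 θ, 1] := by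
  have hq : ∀ e : Fin 5, e = 0 ∨ e = 1 ∨ e = 4 → queueOf N f.fplus f.fminus e θ = 0 :=
    fun e he => hN.queue_eq_zero hf he hθ
  funext e
  fin_cases e <;>
    simp [ctimeOf, hN.time, hN.cap, FlowOverTime.queue, hq]

lemma labelOf_one (hf : Feasible N f) {θ : ℝ} (hθ : 0 ≤ θ) :
    labelOf N f.fplus f.fminus 1 θ = 1 + f.queue 2 θ := by
  simp [labelOf, hN.isWalk_sink_iff, walksToSink, hN.ctimeOf_eq hf hθ]

lemma labelOf_two (hf : Feasible N f) {θ : ℝ} (hθ : 0 ≤ θ) :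
    labelOf N f.fplus f.fminus 2 θ = 2 + f.queue 3 θ := by
  simp [labelOf, hN.isWalk_sink_iff, walksToSink, hN.ctimeOf_eq hf hθ, add_right_comm _ _ (1 : ℝ),
    one_add_one_eq_two]

lemma labelOf_zero (hf : Feasible N f) {θ : ℝ} (hθ : 0 ≤ θ) :
    labelOf N f.fplus f.fminus 0 θ = min (2 + f.queue 2 θ) (3 + f.queue 3 θ) := by
  simp [labelOf, hN.isWalk_sink_iff, walksToSink, hN.ctimeOf_eq hf hθ, ← add_assoc,
    add_right_comm _ _ (1 : ℝ), one_add_one_eq_two, ofPred_or, (by norm_num : (1 : ℝ) + 2 = 3),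
    min_comm (3 + f.queue 3 θ)]

lemma activeOf_zero_iff (hf : Feasible N f) {θ : ℝ} (hθ : 0 ≤ θ) :
    ActiveOf N f.fplus f.fminus 0 θ ↔ routeGap f θ ≤ 0 := by
  have hc : ctimeOf N f.fplus f.fminus 0 θ = 1 := congrFun (hN.ctimeOf_eq hf hθ) 0
  simp only [ActiveOf, hN.tail, hN.head, Matrix.cons_val_zero, hN.labelOf_zero hf hθ,
    hN.labelOf_one hf hθ, hc, routeGap]
  rw [show (1 : ℝ) + (1 + f.queue 2 θ) = 2 + f.queue 2 θ by ring, min_eq_left_iff]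
  constructor <;> intro h <;> linarith

lemma activeOf_one_iff (hf : Feasible N f) {θ : ℝ} (hθ : 0 ≤ θ) :
    ActiveOf N f.fplus f.fminus 1 θ ↔ 0 ≤ routeGap f θ := by
  have hc : ctimeOf N f.fplus f.fminus 1 θ = 1 := congrFun (hN.ctimeOf_eq hf hθ) 1
  simp only [ActiveOf, hN.tail, hN.head, Matrix.cons_val_one, Matrix.cons_val_zero,
    hN.labelOf_zero hf hθ, hN.labelOf_two hf hθ, hc, routeGap]
  rw [show (1 : ℝ) + (2 + f.queue 3 θ) = 3 + f.queue 3 θ by ring, min_eq_right_iff]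
  constructor <;> intro h <;> linarith

lemma routeGap_nonpos_of_fplus_zero_pos (hf : IsIDE N f) {θ : ℝ} (hθ : 0 ≤ θ)
    (hpos : 0 < f.fplus 0 θ) : routeGap f θ ≤ 0 :=
  (hN.activeOf_zero_iff hf.1 hθ).1 (hf.2 0 θ hθ hpos)

lemma routeGap_nonneg_of_fplus_one_pos (hf : IsIDE N f) {θ : ℝ} (hθ : 0 ≤ θ)
    (hpos : 0 < f.fplus 1 θ) : 0 ≤ routeGap f θ :=
  (hN.activeOf_one_iff hf.1 hθ).1 (hf.2 1 θ hθ hpos)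

lemma fplus_zero_eq_zero_of_routeGap_pos (hf : IsIDE N f) {θ : ℝ} (hθ : 0 ≤ θ)
    (hgap : 0 < routeGap f θ) : f.fplus 0 θ = 0 :=
  (f.fplus_nonneg 0 θ).eq_or_lt.elim Eq.symm fun hpos =>
    absurd (hN.routeGap_nonpos_of_fplus_zero_pos hf hθ hpos) hgap.not_ge

lemma fplus_one_eq_zero_of_routeGap_neg (hf : IsIDE N f) {θ : ℝ} (hθ : 0 ≤ θ)
    (hgap : routeGap f θ < 0) : f.fplus 1 θ = 0 :=
  (f.fplus_nonneg 1 θ).eq_or_lt.elim Eq.symm fun hpos =>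
    absurd (hN.routeGap_nonneg_of_fplus_one_pos hf hθ hpos) hgap.not_ge

lemma netRate_of_queue_pos (hf : Feasible N f) {e : Fin 5} (he : e = 2 ∨ e = 3) {θ : ℝ}
    (hθ : 0 ≤ θ) (hq : 0 < f.queue e θ) : f.netRate e θ = f.fplus e θ - 1 := by
  have h := hf.fminus_add_time_of_queue_pos hθ hq
  rw [hN.time, hN.cap_eq_one he] at h
  rw [FlowOverTime.netRate, hN.time, h]

/-- Flow enters `vt` only one time unit after `s → v → t` was a shortest route, so the queue of
`vt` can exceed its value at the last balanced time by at most `1`. -/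
lemma queue_two_le_of_forall_le (hf : IsIDE N f) {θ S : ℝ} (hθ : 0 ≤ θ)
    (hS : ∀ y ∈ Icc 0 θ, f.queue 2 y + f.queue 3 y ≤ S) : f.queue 2 θ ≤ (S + 3) / 2 := by
  rcases le_or_gt (routeGap f θ) 0 with hgap | hgap
  · have := hS θ ⟨hθ, le_rfl⟩
    unfold routeGap at hgap
    linarith
  obtain ⟨x, hx, hx0, hpos⟩ := (continuous_routeGap f).exists_last_zero hθ
    (by rw [hN.routeGap_of_le_one hf.1 le_rfl zero_le_one]; norm_num) hgap
  have hzero : ∀ ζ ∈ Ioo (x + 1) θ, f.fplus 2 ζ = 0 := fun ζ hζ => by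
    have h0 : 0 ≤ ζ - 1 := by linarith [hx.1, hζ.1]
    rw [← sub_add_cancel ζ 1, hN.fplus_two_add_one hf.1 h0]
    exact hN.fplus_zero_eq_zero_of_routeGap_pos hf h0
      (hpos _ ⟨by linarith [hζ.1], by linarith [hζ.2]⟩)
  have hcap := hN.cap_eq_one (Or.inl rfl)
  have hgrow := hf.1.queue_le_add_of_fplus_eq_zero hx.1 hx.2.le zero_le_one (by linarith)
    (fun ζ hζ => hN.fplus_le_two hf.1 2 (hx.1.trans hζ)) hzero
  rw [hcap] at hgrow
  unfold routeGap at hx0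
  linarith [hS x ⟨hx.1, hx.2.le⟩]

lemma queue_three_le_of_forall_le (hf : IsIDE N f) {θ S : ℝ} (hθ : 0 ≤ θ)
    (hS : ∀ y ∈ Icc 0 θ, f.queue 2 y + f.queue 3 y ≤ S) : f.queue 3 θ ≤ (S + 1) / 2 := by
  rcases le_or_gt 0 (routeGap f θ) with hgap | hgap
  · have := hS θ ⟨hθ, le_rfl⟩
    unfold routeGap at hgap
    linarith
  by_cases hex : ∃ y ∈ Icc 0 θ, 0 ≤ routeGap f y
  · obtain ⟨y, hy, hy0⟩ := hex
    obtain ⟨x, hx, hgapx, hneg⟩ := (continuous_neg.comp (continuous_routeGap f)).exists_last_zero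
      hy.2 (by simpa using hy0) (by simpa using hgap)
    have hx0 : 0 ≤ x := hy.1.trans hx.1
    have hzero : ∀ ζ ∈ Ioo (x + 1) θ, f.fplus 3 ζ = 0 := fun ζ hζ => by
      have h0 : 0 ≤ ζ - 1 := by linarith [hζ.1]
      rw [← sub_add_cancel ζ 1, hN.fplus_three_add_one hf.1 h0]
      exact hN.fplus_one_eq_zero_of_routeGap_neg hf h0
        (by simpa using hneg _ ⟨by linarith [hζ.1], by linarith [hζ.2]⟩)
    have hcap := hN.cap_eq_one (Or.inr rfl)
    have hgrow := hf.1.queue_le_add_of_fplus_eq_zero hx0 hx.2.le zero_le_one (by linarith)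
      (fun ζ hζ => hN.fplus_le_two hf.1 3 (hx0.trans hζ)) hzero
    rw [hcap] at hgrow
    simp only [Function.comp_apply, neg_eq_zero, routeGap] at hgapx
    linarith [hS x ⟨hx0, hx.2.le⟩]
  · push Not at hex
    have hzero : ∀ ζ ∈ Ioo 0 θ, f.fplus 3 ζ = 0 := fun ζ hζ => by
      rcases lt_or_ge ζ 1 with h1 | h1
      · exact hN.fplus_three_eq_zero_of_lt_one hf.1 hζ.1.le h1
      · have h0 : 0 ≤ ζ - 1 := by linarith
        rw [← sub_add_cancel ζ 1, hN.fplus_three_add_one hf.1 h0]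
        exact hN.fplus_one_eq_zero_of_routeGap_neg hf h0
          (hex _ ⟨h0, by linarith [hζ.2]⟩)
    have hdrop := f.queue_le_of_fplus_eq_zero hθ
      (ae_restrict_of_forall_mem measurableSet_Ioo hzero)
    have hS0 := hS 0 ⟨le_rfl, hθ⟩
    simp only [hf.1.queue_zero] at hdrop hS0
    linarith

/-- While both queues are nonempty they drain at total rate `2`, which is at least the total
inflow, so their sum cannot grow. -/
lemma queue_add_queue_le_of_pos (hf : Feasible N f) {x y : ℝ} (hx : 0 ≤ x) (hxy : x ≤ y)
    (hpos : ∀ ζ ∈ Ioo x y, 0 < f.queue 2 ζ ∧ 0 < f.queue 3 ζ) :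
    f.queue 2 y + f.queue 3 y ≤ f.queue 2 x + f.queue 3 x := by
  have h := intervalIntegral.integral_mono_on_of_le_Ioo hxy
    ((f.intervalIntegrable_netRate 2 x y).add (f.intervalIntegrable_netRate 3 x y))
    (intervalIntegrable_const (c := 0)) fun ζ hζ => by
      have hζ0 : 0 ≤ ζ := hx.trans hζ.1.le
      simp only [hN.netRate_of_queue_pos hf (Or.inl rfl) hζ0 (hpos ζ hζ).1,
        hN.netRate_of_queue_pos hf (Or.inr rfl) hζ0 (hpos ζ hζ).2]
      linarith [hN.fplus_two_add_fplus_three_le hf hζ0]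
  rw [intervalIntegral.integral_add (f.intervalIntegrable_netRate 2 x y)
    (f.intervalIntegrable_netRate 3 x y), ← f.queue_sub_queue, ← f.queue_sub_queue,
    intervalIntegral.integral_zero] at h
  linarith

lemma queue_two_add_queue_three_le (hf : IsIDE N f) {θ : ℝ} (hθ : 0 ≤ θ) :
    f.queue 2 θ + f.queue 3 θ ≤ 3 := by
  obtain ⟨θs, hθs, hmax⟩ := isCompact_Icc.exists_isMaxOn (nonempty_Icc.2 hθ)
    ((f.continuous_queue 2).add (f.continuous_queue 3)).continuousOn
  set S := f.queue 2 θs + f.queue 3 θs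
  have hS : ∀ y ∈ Icc 0 θ, f.queue 2 y + f.queue 3 y ≤ S := fun y hy => hmax hy
  refine (hS θ ⟨hθ, le_rfl⟩).trans (not_lt.1 fun hS3 => ?_)
  have hq1 : ∀ e, e = 2 ∨ e = 3 → ∀ ζ ∈ Icc (0 : ℝ) 1, f.queue e ζ = 0 :=
    fun e he ζ hζ => hN.queue_eq_zero_of_le_one hf.1 he hζ.1 hζ.2
  have hθs1 : 1 < θs := not_le.1 fun h => by
    simp only [S, hq1 2 (Or.inl rfl) θs ⟨hθs.1, h⟩, hq1 3 (Or.inr rfl) θs ⟨hθs.1, h⟩] at hS3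
    norm_num at hS3
  obtain ⟨x, hx, hPx, hlast⟩ := exists_last_of_isClosed
    (P := fun ζ => f.queue 2 ζ = 0 ∨ f.queue 3 ζ = 0)
    ((isClosed_eq (f.continuous_queue 2) continuous_const).union
      (isClosed_eq (f.continuous_queue 3) continuous_const))
    ⟨1, ⟨le_rfl, hθs1.le⟩, Or.inl (hq1 2 (Or.inl rfl) 1 ⟨zero_le_one, le_rfl⟩)⟩
  have hx0 : 0 ≤ x := zero_le_one.trans hx.1
  have hSx : S ≤ f.queue 2 x + f.queue 3 x :=
    hN.queue_add_queue_le_of_pos hf.1 hx0 hx.2 fun ζ hζ => by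
      have hζ0 : 0 ≤ ζ := hx0.trans hζ.1.le
      have := not_or.1 (hlast ζ ⟨hζ.1, hζ.2.le⟩)
      exact ⟨(hf.1.queue_nonneg 2 hζ0).lt_of_ne' this.1,
        (hf.1.queue_nonneg 3 hζ0).lt_of_ne' this.2⟩
  have hSx' : ∀ y ∈ Icc 0 x, f.queue 2 y + f.queue 3 y ≤ S :=
    fun y hy => hS y ⟨hy.1, hy.2.trans (hx.2.trans hθs.2)⟩
  rcases hPx with h2 | h3
  · linarith [hN.queue_three_le_of_forall_le hf hx0 hSx']
  · linarith [hN.queue_two_le_of_forall_le hf hx0 hSx']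

lemma queue_two_le_three (hf : IsIDE N f) {θ : ℝ} (hθ : 0 ≤ θ) : f.queue 2 θ ≤ 3 := by
  linarith [hN.queue_two_le_of_forall_le hf hθ fun y hy => hN.queue_two_add_queue_three_le hf hy.1]

lemma queue_three_le_two (hf : IsIDE N f) {θ : ℝ} (hθ : 0 ≤ θ) : f.queue 3 θ ≤ 2 := by
  linarith [hN.queue_three_le_of_forall_le hf hθ fun y hy =>
    hN.queue_two_add_queue_three_le hf hy.1]

lemma ae_fplus_two_three_of_ae (hf : Feasible N f) {a b : ℝ} (ha : 0 ≤ a) {P : ℝ → ℝ → Prop}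
    (h : ∀ᵐ ζ ∂volume.restrict (Ioo a b), P (f.fplus 0 ζ) (f.fplus 1 ζ)) :
    ∀ᵐ ζ ∂volume.restrict (Ioo (a + 1) (b + 1)), P (f.fplus 2 ζ) (f.fplus 3 ζ) := by
  have hshift := ae_restrict_Ioo_comp_add (-1) h
  simp only [sub_neg_eq_add, ← sub_eq_add_neg] at hshift
  filter_upwards [hshift, ae_restrict_mem measurableSet_Ioo] with ζ hζ hζI
  have h0 : 0 ≤ ζ - 1 := by linarith [hζI.1]
  rwa [← sub_add_cancel ζ 1, hN.fplus_two_add_one hf h0, hN.fplus_three_add_one hf h0]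

lemma routeGap_eq_zero_of_ae_pos (hf : IsIDE N f) {a b : ℝ} (ha : 0 ≤ a) (hab : a < b)
    (h : ∀ᵐ ζ ∂volume.restrict (Ioo a b), 0 < f.fplus 0 ζ ∧ 0 < f.fplus 1 ζ) :
    ∀ ζ ∈ Icc a b, routeGap f ζ = 0 := by
  have hle := (continuous_routeGap f).le_of_ae_restrict_Ioo continuous_const hab (by
    filter_upwards [h, ae_restrict_mem measurableSet_Ioo] with ζ hζ hζI
    exact hN.routeGap_nonpos_of_fplus_zero_pos hf (ha.trans hζI.1.le) hζ.1)
  have hge := continuous_const.le_of_ae_restrict_Ioo (continuous_routeGap f) hab (by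
    filter_upwards [h, ae_restrict_mem measurableSet_Ioo] with ζ hζ hζI
    exact hN.routeGap_nonneg_of_fplus_one_pos hf (ha.trans hζI.1.le) hζ.2)
  exact fun ζ hζ => le_antisymm (hle ζ hζ) (hge ζ hζ)

/-- On an interval where both routes stay equally long, the queue of `vt` drains at rate `1`,
so the two queues can only stay balanced if `vt` receives inflow at rate exactly `1`. -/
lemma fplus_two_ae_eq_one (hf : Feasible N f) {r m : ℝ} (hr : 1 ≤ r) (hm : m ≤ U + 1)
    (hgap : ∀ ζ ∈ Icc r m, routeGap f ζ = 0) :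
    ∀ᵐ ζ ∂volume.restrict (Ioo r m), f.fplus 2 ζ = 1 := by
  have hint : ∀ x ∈ Icc r m, ∫ ζ in r..x, (f.netRate 2 ζ - f.netRate 3 ζ) = 0 := fun x hx => by
    rw [intervalIntegral.integral_sub (f.intervalIntegrable_netRate 2 r x)
      (f.intervalIntegrable_netRate 3 r x), ← f.queue_sub_queue, ← f.queue_sub_queue]
    have h1 := hgap x hx
    have h2 := hgap r ⟨le_rfl, hx.1.trans hx.2⟩
    unfold routeGap at h1 h2
    linarith
  have hae := ae_eq_zero_of_forall_intervalIntegral_eq_zero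
    ((f.intervalIntegrable_netRate 2 r m).sub (f.intervalIntegrable_netRate 3 r m)) hint
  filter_upwards [hae, ae_restrict_mem measurableSet_Ioo] with ζ hζ hζI
  have hζ0 : 0 ≤ ζ := by linarith [hζI.1]
  have hq2 : 0 < f.queue 2 ζ := by
    have := hgap ζ (Ioo_subset_Icc_self hζI)
    unfold routeGap at this
    linarith [hf.queue_nonneg 3 hζ0]
  have hsum := hN.fplus_two_add_fplus_three hf (by linarith [hζI.1] : 1 ≤ ζ)
  rw [hN.u_zero_eq_two (by linarith [hζI.1]) (by linarith [hζI.2])] at hsum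
  rw [hN.netRate_of_queue_pos hf (Or.inl rfl) hζ0 hq2] at hζ
  rcases lt_or_ge 0 (f.queue 3 ζ) with hq3 | hq3
  · rw [hN.netRate_of_queue_pos hf (Or.inr rfl) hζ0 hq3] at hζ
    linarith
  · have h := hf.fminus_add_time_of_queue_nonpos hζ0 hq3
    rw [FlowOverTime.netRate, h, hN.cap_eq_one (Or.inr rfl)] at hζ
    rcases min_cases (f.fplus 3 ζ) 1 with ⟨h', -⟩ | ⟨h', -⟩ <;> rw [h'] at hζ <;> linarith

lemma routeGap_eq_zero_on_Icc_sub_one (hf : IsIDE N f) {r m : ℝ} (hr : 1 ≤ r) (hrm : r + 1 ≤ m)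
    (hm : m ≤ U) (hgap : ∀ ζ ∈ Icc r m, routeGap f ζ = 0) :
    ∀ ζ ∈ Icc (r - 1) m, routeGap f ζ = 0 := by
  have hpos : ∀ᵐ ζ ∂volume.restrict (Ioo (r - 1) (m - 1)), 0 < f.fplus 0 ζ ∧ 0 < f.fplus 1 ζ := by
    filter_upwards [ae_restrict_Ioo_comp_add 1 (hN.fplus_two_ae_eq_one hf.1 hr (by linarith) hgap),
      ae_restrict_mem measurableSet_Ioo] with ζ hζ hζI
    have hζ0 : 0 ≤ ζ := by linarith [hζI.1]
    have hsum := hN.fplus_zero_add_fplus_one hf.1 hζ0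
    rw [hN.u_zero_eq_two hζ0 (by linarith [hζI.2])] at hsum
    rw [hN.fplus_two_add_one hf.1 hζ0] at hζ
    constructor <;> linarith
  have hearly := hN.routeGap_eq_zero_of_ae_pos hf (by linarith) (by linarith) hpos
  intro ζ hζ
  rcases le_or_gt ζ (m - 1) with h | h
  · exact hearly ζ ⟨hζ.1, h⟩
  · exact hgap ζ ⟨by linarith, hζ.2⟩

lemma not_forall_routeGap_eq_zero (hf : IsIDE N f) {a b : ℝ} (ha : 0 ≤ a) (hab : a + 1 ≤ b)
    (hb : b ≤ U) : ¬ ∀ ζ ∈ Icc a b, routeGap f ζ = 0 := by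
  have hbase : ∀ r, 0 ≤ r → r ≤ 1 → r + 1 ≤ b → ¬ ∀ ζ ∈ Icc r b, routeGap f ζ = 0 :=
    fun r hr0 hr hrb h => by
      have := h 1 ⟨hr, by linarith⟩
      rw [hN.routeGap_of_le_one hf.1 zero_le_one le_rfl] at this
      norm_num at this
  suffices ∀ k : ℕ, ∀ r : ℝ, 0 ≤ r → r ≤ k + 1 → r + 1 ≤ b →
      ¬ ∀ ζ ∈ Icc r b, routeGap f ζ = 0 from
    this ⌈a⌉₊ a ha (by linarith [Nat.le_ceil a]) hab
  intro k
  induction k with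
  | zero => simpa using hbase
  | succ k ih =>
    intro r hr0 hrk hrb h
    rcases le_or_gt r 1 with hr | hr
    · exact hbase r hr0 hr hrb h
    · exact ih (r - 1) (by linarith) (by push_cast at hrk; linarith) (by linarith)
        (hN.routeGap_eq_zero_on_Icc_sub_one hf hr.le hrb hb h)

lemma false_of_ae_route_via_v (hf : IsIDE N f) {a b : ℝ} (ha : 0 ≤ a) (hab : a + 3 < b)
    (h : ∀ᵐ ζ ∂volume.restrict (Ioo a b), f.fplus 0 ζ = 2 ∧ f.fplus 1 ζ = 0) : False := by
  have hact : ∀ᵐ ζ ∂volume.restrict (Ioo a b), routeGap f ζ ≤ 0 := by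
    filter_upwards [h, ae_restrict_mem measurableSet_Ioo] with ζ hζ hζI
    exact hN.routeGap_nonpos_of_fplus_zero_pos hf (ha.trans hζI.1.le) (by rw [hζ.1]; norm_num)
  have hgap := (continuous_routeGap f).le_of_ae_restrict_Ioo continuous_const (by linarith) hact
    b ⟨by linarith, le_rfl⟩
  have hin : ∀ᵐ ζ ∂volume.restrict (Ioo (a + 1) b), f.fplus 2 ζ = 2 ∧ f.fplus 3 ζ = 0 :=
    ae_restrict_of_ae_restrict_of_subset (Ioo_subset_Ioo_right (by linarith : b ≤ b + 1))
      (hN.ae_fplus_two_three_of_ae hf.1 ha (P := fun x y => x = 2 ∧ y = 0) h)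
  have hq2 := hf.1.le_queue_sub_of_le_fplus (by linarith) (by linarith)
    (hin.mono fun ζ hζ => hζ.1.ge)
  have hq3 := hf.1.queue_le_max_of_fplus_eq_zero (by linarith) (by linarith)
    (hin.mono fun ζ hζ => hζ.2)
  rw [hN.cap_eq_one (Or.inl rfl)] at hq2
  rw [hN.cap_eq_one (Or.inr rfl)] at hq3
  have hq3a := hN.queue_three_le_two hf (by linarith : 0 ≤ a + 1)
  have hq3b : f.queue 3 b ≤ 0 := hq3.trans (max_le le_rfl (by linarith))
  unfold routeGap at hgap
  linarith [hf.1.queue_nonneg 2 (by linarith : 0 ≤ a + 1)]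

lemma false_of_ae_route_via_w (hf : IsIDE N f) {a b : ℝ} (ha : 0 ≤ a) (hab : a + 3 < b)
    (h : ∀ᵐ ζ ∂volume.restrict (Ioo a b), f.fplus 0 ζ = 0 ∧ f.fplus 1 ζ = 2) : False := by
  have hact : ∀ᵐ ζ ∂volume.restrict (Ioo a b), 0 ≤ routeGap f ζ := by
    filter_upwards [h, ae_restrict_mem measurableSet_Ioo] with ζ hζ hζI
    exact hN.routeGap_nonneg_of_fplus_one_pos hf (ha.trans hζI.1.le) (by rw [hζ.2]; norm_num)
  have hgap := continuous_const.le_of_ae_restrict_Ioo (continuous_routeGap f) (by linarith) hact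
    b ⟨by linarith, le_rfl⟩
  have hin : ∀ᵐ ζ ∂volume.restrict (Ioo (a + 1) b), f.fplus 2 ζ = 0 ∧ f.fplus 3 ζ = 2 :=
    ae_restrict_of_ae_restrict_of_subset (Ioo_subset_Ioo_right (by linarith : b ≤ b + 1))
      (hN.ae_fplus_two_three_of_ae hf.1 ha (P := fun x y => x = 0 ∧ y = 2) h)
  have hq3 := hf.1.le_queue_sub_of_le_fplus (by linarith) (by linarith)
    (hin.mono fun ζ hζ => hζ.2.ge)
  have hq2 := hf.1.queue_le_max_of_fplus_eq_zero (by linarith) (by linarith)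
    (hin.mono fun ζ hζ => hζ.1)
  rw [hN.cap_eq_one (Or.inr rfl)] at hq3
  rw [hN.cap_eq_one (Or.inl rfl)] at hq2
  have hq2a := hN.queue_two_le_three hf (by linarith : 0 ≤ a + 1)
  have hq2b : f.queue 2 b ≤ 1 := hq2.trans (max_le zero_le_one (by linarith))
  unfold routeGap at hgap
  linarith [hf.1.queue_nonneg 3 (by linarith : 0 ≤ a + 1)]

lemma sub_le_four_of_ratesAEConstOn (hf : IsIDE N f) {a b : ℝ} (ha : 0 ≤ a) (hb : b ≤ U)
    (hconst : RatesAEConstOn f (Ioo a b)) : b - a ≤ 4 := by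
  by_contra! hlong
  obtain ⟨c₀, hc₀⟩ := (hconst 0).1
  obtain ⟨c₁, hc₁⟩ := (hconst 1).1
  have hsum : ∀ ζ ∈ Ioo a b, f.fplus 0 ζ + f.fplus 1 ζ = 2 := fun ζ hζ => by
    rw [hN.fplus_zero_add_fplus_one hf.1 (ha.trans hζ.1.le),
      hN.u_zero_eq_two (ha.trans hζ.1.le) (hζ.2.trans_le hb)]
  obtain ⟨ζ, hζ, h₀, h₁⟩ := exists_mem_Ioo_of_ae_restrict (by linarith) (hc₀.and hc₁)
  have hc : c₀ + c₁ = 2 := h₀ ▸ h₁ ▸ hsum ζ hζ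
  have hc₀nn : 0 ≤ c₀ := h₀ ▸ f.fplus_nonneg 0 ζ
  have hc₁nn : 0 ≤ c₁ := h₁ ▸ f.fplus_nonneg 1 ζ
  rcases hc₀nn.eq_or_lt with h0 | h0
  · exact hN.false_of_ae_route_via_w hf ha (by linarith)
      (hc₀.and hc₁ |>.mono fun ζ hζ => ⟨hζ.1.trans h0.symm, by linarith [hζ.2]⟩)
  rcases hc₁nn.eq_or_lt with h1 | h1
  · exact hN.false_of_ae_route_via_v hf ha (by linarith)
      (hc₀.and hc₁ |>.mono fun ζ hζ => ⟨by linarith [hζ.1], hζ.2.trans h1.symm⟩)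
  exact hN.not_forall_routeGap_eq_zero hf ha (by linarith) hb
    (hN.routeGap_eq_zero_of_ae_pos hf ha (by linarith)
      (hc₀.and hc₁ |>.mono fun ζ hζ => ⟨hζ.1 ▸ h0, hζ.2 ▸ h1⟩))

end IsNetworkN0

theorem ide_output_complexity_lower_bound_general
    (U : ℕ)
    (N : Network (Fin 5) (Fin 5))
    (htail : N.tail = ![0, 0, 1, 2, 3])
    (hhead : N.head = ![1, 2, 4, 3, 4])
    (hcap : N.cap = ![2, 2, 1, 1, 1])
    (htime : ∀ e, N.time e = 1)
    (hsink : N.sink = 4)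
    (hu : ∀ w θ, N.u w θ = if w = 0 ∧ 0 ≤ θ ∧ θ < (U : ℝ) then 2 else 0) :
    ∀ f : FlowOverTime N, IsIDE N f →
      ∀ (n : ℕ) (t : ℕ → ℝ), PhasePartition N f n t → U / 4 ≤ n + 1 := by
  intro f hf n t ht
  have hN : IsNetworkN0 U N := ⟨htail, hhead, hcap, htime, hsink, hu⟩
  have hU : (U : ℝ) ≤ (n + 1) * 4 :=
    ht.le_mul_of_window_le (fun _ _ => hN.sub_le_four_of_ratesAEConstOn hf) (by norm_num)
  have : U ≤ (n + 1) * 4 := by exact_mod_cast hU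
  exact Nat.div_le_of_le_mul (by omega)

/-- In the five-node network `N₀` (nodes `s=0, v=1, w=2, x=3, t=4`,
edges `sv=0, sw=1, vt=2, wx=3, xt=4`, all travel times `1`, capacities `2,2,1,1,1`,
sink `t`) with network inflow rate `2·1_{[0,U)}` at `s`, every IDE flow has at least
`⌊U/4⌋` phases: any partition of `ℝ≥0` into `n+1` intervals of a.e. constant in- and
outflow rates satisfies `⌊U/4⌋ ≤ n+1`. Hence the number of phases of an IDE is in
general not polynomially bounded in the encoding size (`O(log U)`) of the instance. -/
theorem ide_output_complexity_lower_bound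
    (U : ℕ) (hU : 1 ≤ U)
    (N : Network (Fin 5) (Fin 5))
    (htail : N.tail = ![0, 0, 1, 2, 3])
    (hhead : N.head = ![1, 2, 4, 3, 4])
    (hcap : N.cap = ![2, 2, 1, 1, 1])
    (htime : ∀ e, N.time e = 1)
    (hsink : N.sink = 4)
    (hu : ∀ w θ, N.u w θ = if w = 0 ∧ 0 ≤ θ ∧ θ < (U : ℝ) then 2 else 0) :
    ∀ f : FlowOverTime N, IsIDE N f →
      ∀ (n : ℕ) (t : ℕ → ℝ), PhasePartition N f n t → U / 4 ≤ n + 1 :=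
  ide_output_complexity_lower_bound_general U N htail hhead hcap htime hsink hu
end
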